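/- arXiv:1809.06001 — 9 statements merged into one kernel-verified Lean document; each statement's English description precedes it below -/
import Mathlib

section
/- Let n ≥ 1 and let φ : ℝⁿ → ℝ be a continuously differentiable, strictly convex function. Suppose there exist R > 0 and a real number d > 1 such that φ(t·x) = t^d · φ(x) for every x ∈ ℝⁿ with ‖x‖ ≥ R and every real t ≥ 1. Then the gradient map ∇φ : ℝⁿ → ℝⁿ is surjective. -/
/-!
Strict convexity along a ray `t ↦ φ (t • x) = t ^ d * φ x` forces `φ > 0` on the sphere of
radius `R`, so by compactness and homogeneity `φ x ≥ c ‖x‖ ^ d` far out. Since `d > 1`, every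
tilted function `φ - ⟪y, ·⟫` is then coercive; it attains a minimum, where `∇φ = y`.
-/

open Set Filter
open scoped RealInnerProductSpace

theorem StrictConvexOn.pos_of_rpow_homogeneous {E : Type*} [AddCommGroup E] [Module ℝ E]
    {f : E → ℝ} (hf : StrictConvexOn ℝ univ f) {d : ℝ} (hd : 1 ≤ d) {x : E} (hx : x ≠ 0)
    (hhom : ∀ t : ℝ, 1 ≤ t → f (t • x) = t ^ d * f x) : 0 < f x := by
  have hne : x ≠ (3 : ℝ) • x := by
    intro h
    have : ((3 : ℝ) - 1) • x = 0 := by rw [sub_smul, one_smul, ← h, sub_self]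
    exact hx ((smul_eq_zero.1 this).resolve_left (by norm_num))
  have hmid : (1 / 2 : ℝ) • x + (1 / 2 : ℝ) • ((3 : ℝ) • x) = (2 : ℝ) • x := by
    rw [smul_smul, ← add_smul]; norm_num
  have hf_mid := hf.2 (mem_univ x) (mem_univ _) hne (by norm_num : (0 : ℝ) < 1 / 2)
    (by norm_num : (0 : ℝ) < 1 / 2) (by norm_num)
  rw [hmid, hhom 2 (by norm_num), hhom 3 (by norm_num), smul_eq_mul, smul_eq_mul] at hf_mid
  have hrpow_mid : (2 : ℝ) ^ d ≤ 1 / 2 + 1 / 2 * 3 ^ d := by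
    have h := (convexOn_rpow hd).2 (mem_Ici.2 zero_le_one) (mem_Ici.2 (by norm_num : (0 : ℝ) ≤ 3))
      (by norm_num : (0 : ℝ) ≤ 1 / 2) (by norm_num : (0 : ℝ) ≤ 1 / 2) (by norm_num)
    norm_num at h
    linarith
  nlinarith

section

variable {E : Type*} [NormedAddCommGroup E]

theorem exists_pos_mul_rpow_le_of_homogeneous [NormedSpace ℝ E] [ProperSpace E] {f : E → ℝ}
    (hf : Continuous f) {R d : ℝ} (hR : 0 < R) (hpos : ∀ x, ‖x‖ = R → 0 < f x)
    (hhom : ∀ x, R ≤ ‖x‖ → ∀ t : ℝ, 1 ≤ t → f (t • x) = t ^ d * f x) :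
    ∃ c > 0, ∀ x, R ≤ ‖x‖ → c * ‖x‖ ^ d ≤ f x := by
  obtain ⟨m, hm, hmin⟩ := (isCompact_sphere (0 : E) R).exists_forall_le' hf.continuousOn
    fun x hx ↦ hpos x (mem_sphere_zero_iff_norm.1 hx)
  refine ⟨m / R ^ d, div_pos hm (Real.rpow_pos_of_pos hR d), fun x hx ↦ ?_⟩
  have hx0 : 0 < ‖x‖ := hR.trans_le hx
  set t := ‖x‖ / R
  set u := (R / ‖x‖) • x
  have hu : ‖u‖ = R := by
    rw [norm_smul, Real.norm_of_nonneg (div_nonneg hR.le hx0.le), div_mul_cancel₀ _ hx0.ne']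
  have hxu : t • u = x := by
    rw [smul_smul, div_mul_div_cancel₀ hR.ne', div_self hx0.ne', one_smul]
  calc m / R ^ d * ‖x‖ ^ d = t ^ d * m := by
        rw [Real.div_rpow hx0.le hR.le]; ring
    _ ≤ t ^ d * f u := by
        gcongr
        exact hmin u (mem_sphere_zero_iff_norm.2 hu)
    _ = f x := by rw [← hhom u hu.ge t ((one_le_div hR).2 hx), hxu]

theorem tendsto_mul_rpow_sub_mul_atTop {c d : ℝ} (hc : 0 < c) (hd : 1 < d) (b : ℝ) :
    Tendsto (fun s : ℝ ↦ c * s ^ d - b * s) atTop atTop := by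
  have h : Tendsto (fun s : ℝ ↦ (c * s ^ (d - 1) - b) * s) atTop atTop :=
    (tendsto_atTop_add_const_right _ _
      ((tendsto_rpow_atTop (by linarith)).const_mul_atTop hc)).atTop_mul_atTop₀ tendsto_id
  refine h.congr' ?_
  filter_upwards [eventually_gt_atTop 0] with s hs
  rw [sub_mul, mul_assoc, ← Real.rpow_add_one hs.ne', sub_add_cancel]

variable [InnerProductSpace ℝ E]

theorem tendsto_sub_inner_cocompact_of_mul_rpow_le [ProperSpace E] {f : E → ℝ} {c R d : ℝ}
    (hc : 0 < c) (hd : 1 < d) (hgrow : ∀ x, R ≤ ‖x‖ → c * ‖x‖ ^ d ≤ f x) (y : E) :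
    Tendsto (fun x ↦ f x - ⟪y, x⟫) (cocompact E) atTop := by
  refine tendsto_atTop_mono' _ ?_
    ((tendsto_mul_rpow_sub_mul_atTop hc hd ‖y‖).comp tendsto_norm_cocompact_atTop)
  filter_upwards [tendsto_norm_cocompact_atTop.eventually (eventually_ge_atTop R)] with x hx
  have := real_inner_le_norm y x
  have := hgrow x hx
  simp only [Function.comp]
  linarith

theorem exists_gradient_eq_of_tendsto_sub_inner [ProperSpace E] {f : E → ℝ}
    (hf : Differentiable ℝ f) {y : E} (h : Tendsto (fun x ↦ f x - ⟪y, x⟫) (cocompact E) atTop) :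
    ∃ x, gradient f x = y := by
  let ℓ : E →L[ℝ] ℝ := InnerProductSpace.toDual ℝ E y
  obtain ⟨x, hx⟩ := (hf.continuous.sub ℓ.continuous).exists_forall_le h
  have hmin : IsLocalMin (f - ⇑ℓ) x := Eventually.of_forall hx
  have hderiv : fderiv ℝ f x - ℓ = 0 :=
    hmin.hasFDerivAt_eq_zero ((hf x).hasFDerivAt.sub ℓ.hasFDerivAt)
  refine ⟨x, ?_⟩
  rw [gradient, sub_eq_zero.1 hderiv]
  exact (InnerProductSpace.toDual ℝ E).symm_apply_apply y

end

theorem statement0_general (n : ℕ)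
    (φ : EuclideanSpace ℝ (Fin n) → ℝ)
    (hC1 : ContDiff ℝ 1 φ)
    (hconv : StrictConvexOn ℝ Set.univ φ)
    (R : ℝ) (hR : 0 < R) (d : ℝ) (hd : 1 < d)
    (hhom : ∀ x : EuclideanSpace ℝ (Fin n), R ≤ ‖x‖ →
      ∀ t : ℝ, 1 ≤ t → φ (t • x) = t ^ d * φ x) :
    Function.Surjective (gradient φ) := by
  intro y
  have hpos : ∀ x, ‖x‖ = R → 0 < φ x := fun x hx ↦
    hconv.pos_of_rpow_homogeneous hd.le (norm_ne_zero_iff.1 (hx ▸ hR.ne')) (hhom x hx.ge)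
  obtain ⟨c, hc, hgrow⟩ := exists_pos_mul_rpow_le_of_homogeneous hC1.continuous hR hpos hhom
  exact exists_gradient_eq_of_tendsto_sub_inner (hC1.differentiable one_ne_zero)
    (tendsto_sub_inner_cocompact_of_mul_rpow_le hc hd hgrow y)

/-- A continuously differentiable, strictly convex function on `ℝⁿ`
which is positively homogeneous of degree `d > 1` outside a compact set has surjective
gradient map. -/
theorem statement0 (n : ℕ) (hn : 1 ≤ n)
    (φ : EuclideanSpace ℝ (Fin n) → ℝ)
    (hC1 : ContDiff ℝ 1 φ)
    (hconv : StrictConvexOn ℝ Set.univ φ)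
    (R : ℝ) (hR : 0 < R) (d : ℝ) (hd : 1 < d)
    (hhom : ∀ x : EuclideanSpace ℝ (Fin n), R ≤ ‖x‖ →
      ∀ t : ℝ, 1 ≤ t → φ (t • x) = t ^ d * φ x) :
    Function.Surjective (gradient φ) :=
  statement0_general n φ hC1 hconv R hR d hd hhom
end

section
/- Let n ≥ 1, let ι be a nonempty finite index set, and let m : ι → ℝⁿ satisfy: (a) for every j ∈ ι there exists u ∈ ℝⁿ with ⟨m_j, u⟩ < ⟨m_l, u⟩ for all l ≠ j; and (b) the convex hull of {m_j : j ∈ ι} has nonempty interior in ℝⁿ. Define F(u) = min_{j ∈ ι} ⟨m_j, u⟩. Let ε > 0 and let η : ℝⁿ → ℝ be C^∞, nonnegative, with support contained in the closed ball of radius ε about 0 and with ∫ η = 1. Then the mollification H = F ⋆ η is smooth and the range of its gradient map ∇H : ℝⁿ → ℝⁿ is exactly the polytope convexHull{m_j : j ∈ ι}. -/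
/-!
Write `F = minInner P` for the minimum of the linear forms `⟪y, ·⟫`, `y ∈ P`, and `H` for its
mollification. The inequality `F (u + t • w) ≤ F u + t * max_{y ∈ P} ⟪y, w⟫` (`t ≥ 0`) survives
mollification, so every directional derivative of `H` is bounded by the support function of
`convexHull P`, and Hahn–Banach puts `∇H x` in the polytope.

Conversely `∇H x = p` as soon as `x` maximises `H - ⟪p, ·⟫`, and we find such a maximiser by
induction on `P`. If no direction `v` exposes a proper face of `convexHull P` containing `p`, then
`H - ⟪p, ·⟫ ≤ ⟪y - p, ·⟫ + C_y` for all `y ∈ P`, it is invariant along the common kernel of the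
`⟪y - p, ·⟫`, and it is coercive on the orthogonal complement of that kernel. Otherwise such a `v`
cuts out a face `Q ⊊ P` with `p ∈ convexHull Q`; far out in direction `v` the minimum over `P`
agrees with the minimum over `Q` on an `ε`-ball, and translating a maximiser for `Q` far
along `v` gives a maximiser for `P`.
-/

open scoped RealInnerProductSpace
open MeasureTheory Metric Set Filter Topology

section

variable {E : Type*} [NormedAddCommGroup E] [InnerProductSpace ℝ E]

theorem inner_le_of_hasGradientAt [CompleteSpace E] {f : E → ℝ} {g x w : E} {s : ℝ}
    (hf : HasGradientAt f g x) (h : ∀ t > 0, f (x + t • w) ≤ f x + t * s) : ⟪g, w⟫ ≤ s := by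
  have hline : HasDerivAt (fun t : ℝ => f (x + t • w)) ⟪g, w⟫ 0 := by
    have hpath : HasDerivAt (fun t : ℝ => x + t • w) w 0 := by
      simpa using ((hasDerivAt_id (0 : ℝ)).smul_const w).const_add x
    have hf0 : HasFDerivAt f (InnerProductSpace.toDual ℝ E g) (x + (0 : ℝ) • w) := by
      simpa [hasGradientAt_iff_hasFDerivAt] using hf
    have := hf0.comp_hasDerivAt (0 : ℝ) hpath
    simp only [InnerProductSpace.toDual_apply_apply] at this
    exact this
  refine le_of_tendsto hline.tendsto_slope_zero_right ?_
  filter_upwards [self_mem_nhdsWithin] with t (ht : 0 < t)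
  rw [smul_eq_mul, inv_mul_le_iff₀ ht]
  simpa [sub_le_iff_le_add', add_comm] using h t ht

theorem gradient_eq_of_forall_sub_inner_le [CompleteSpace E] {f : E → ℝ} {p x : E}
    (hf : DifferentiableAt ℝ f x) (hmax : ∀ y, f y - ⟪p, y⟫ ≤ f x - ⟪p, x⟫) :
    gradient f x = p := by
  have hle : ∀ w, ⟪gradient f x, w⟫ ≤ ⟪p, w⟫ := fun w =>
    inner_le_of_hasGradientAt hf.hasGradientAt fun t _ => by
      have := hmax (x + t • w)
      rw [inner_add_right, real_inner_smul_right] at this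
      linarith
  have hzero : ⟪gradient f x - p, gradient f x - p⟫ ≤ 0 := by
    rw [inner_sub_left]; linarith [hle (gradient f x - p)]
  exact sub_eq_zero.1 (real_inner_self_nonpos.1 hzero)

theorem mem_convexHull_of_forall_inner_le_sup' [CompleteSpace E] {P : Finset E}
    (hP : P.Nonempty) {p : E} (h : ∀ w, ⟪p, w⟫ ≤ P.sup' hP fun y => ⟪y, w⟫) :
    p ∈ convexHull ℝ (P : Set E) := by
  by_contra hp
  obtain ⟨f, u, hfu, huf⟩ := geometric_hahn_banach_closed_point (convex_convexHull ℝ _)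
    (P.finite_toSet.isClosed_convexHull ℝ) hp
  set w := (InnerProductSpace.toDual ℝ E).symm f
  have hw : ∀ z, ⟪w, z⟫ = f z := fun z => InnerProductSpace.toDual_symm_apply
  have hsup : (P.sup' hP fun y => ⟪y, w⟫) < u := by
    rw [Finset.sup'_lt_iff]
    intro y hy
    rw [real_inner_comm, hw]
    exact hfu y (subset_convexHull ℝ _ hy)
  linarith [h w, hw p, real_inner_comm p w]

theorem mem_convexHull_filter_of_inner_le {P : Finset E} {p v : E}
    (hp : p ∈ convexHull ℝ (P : Set E)) (hv : ∀ y ∈ P, ⟪p, v⟫ ≤ ⟪y, v⟫) :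
    p ∈ convexHull ℝ (P.filter fun y => ⟪y, v⟫ = ⟪p, v⟫ : Set E) := by
  classical
  obtain ⟨w, hw0, hw1, hwp⟩ := Finset.mem_convexHull'.1 hp
  have hterm : ∀ y ∈ P, w y * (⟪y, v⟫ - ⟪p, v⟫) = 0 := by
    refine (Finset.sum_eq_zero_iff_of_nonneg fun y hy =>
      mul_nonneg (hw0 y hy) (sub_nonneg.2 (hv y hy))).1 ?_
    calc ∑ y ∈ P, w y * (⟪y, v⟫ - ⟪p, v⟫)
        = ⟪∑ y ∈ P, w y • y, v⟫ - (∑ y ∈ P, w y) * ⟪p, v⟫ := by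
          simp only [mul_sub, Finset.sum_sub_distrib, Finset.sum_mul, sum_inner,
            real_inner_smul_left]
      _ = 0 := by rw [hwp, hw1, one_mul, sub_self]
  have hsupp : ∀ y ∈ P, w y ≠ 0 → ⟪y, v⟫ = ⟪p, v⟫ := fun y hy hwy =>
    sub_eq_zero.1 ((mul_eq_zero.1 (hterm y hy)).resolve_left hwy)
  refine Finset.mem_convexHull'.2 ⟨w, fun y hy => hw0 y (Finset.mem_filter.1 hy).1, ?_, ?_⟩
  · rwa [Finset.sum_filter_of_ne hsupp]
  · rwa [Finset.sum_filter_of_ne fun y hy hwy =>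
      hsupp y hy fun h => hwy (by rw [h, zero_smul])]

end

section

variable {E : Type*} [NormedAddCommGroup E] [MeasurableSpace E]

noncomputable def mollify (μ : Measure E) (η f : E → ℝ) (x : E) : ℝ :=
  ∫ y, f (x - y) * η y ∂μ

theorem mollify_comp_add_right (μ : Measure E) (η f : E → ℝ) (v x : E) :
    mollify μ η (fun u => f (u + v)) x = mollify μ η f (x + v) := by
  simp only [mollify, sub_add_eq_add_sub]

theorem mollify_congr {μ : Measure E} {ε : ℝ} {η f g : E → ℝ}
    (hsupp : Function.support η ⊆ closedBall 0 ε) {x : E}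
    (h : ∀ y ∈ closedBall (0 : E) ε, f (x - y) = g (x - y)) :
    mollify μ η f x = mollify μ η g x := by
  refine integral_congr_ae (Eventually.of_forall fun y => ?_)
  by_cases hy : η y = 0
  · simp [hy]
  · simp only [h y (hsupp hy)]

theorem contDiff_mollify [NormedSpace ℝ E] [FiniteDimensional ℝ E] [BorelSpace E]
    {μ : Measure E} [μ.IsAddHaarMeasure] {n : ℕ∞} {η f : E → ℝ}
    (hη : ContDiff ℝ n η) (hηc : HasCompactSupport η) (hf : Continuous f) :
    ContDiff ℝ n (mollify μ η f) := by
  have : mollify μ η f = convolution η f (ContinuousLinearMap.mul ℝ ℝ) μ := by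
    funext x
    simp [mollify, convolution_def, mul_comm]
  rw [this]
  exact hηc.contDiff_convolution_left _ hη hf.locallyIntegrable

structure IsMollifier (μ : Measure E) (ε : ℝ) (η : E → ℝ) : Prop where
  continuous : Continuous η
  nonneg : ∀ y, 0 ≤ η y
  support_subset : Function.support η ⊆ closedBall 0 ε
  integral_eq_one : ∫ y, η y ∂μ = 1

namespace IsMollifier

variable [ProperSpace E] {μ : Measure E} {ε : ℝ} {η f g : E → ℝ} (hη : IsMollifier μ ε η)
include hη

theorem hasCompactSupport : HasCompactSupport η :=
  HasCompactSupport.intro (isCompact_closedBall 0 ε) fun _ hy =>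
    Function.notMem_support.1 fun h => hy (hη.support_subset h)

variable [BorelSpace E] [IsFiniteMeasureOnCompacts μ]

theorem integrable_mul (hf : Continuous f) : Integrable (fun y => f y * η y) μ :=
  (hf.mul hη.continuous).integrable_of_hasCompactSupport hη.hasCompactSupport.mul_left

theorem integrable_comp_sub_mul (hf : Continuous f) (x : E) :
    Integrable (fun y => f (x - y) * η y) μ :=
  hη.integrable_mul (hf.comp (continuous_sub_left x))

theorem mollify_mono (hf : Continuous f) (hg : Continuous g) (hfg : ∀ u, f u ≤ g u)
    (x : E) : mollify μ η f x ≤ mollify μ η g x :=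
  integral_mono (hη.integrable_comp_sub_mul hf x) (hη.integrable_comp_sub_mul hg x)
    fun y => mul_le_mul_of_nonneg_right (hfg _) (hη.nonneg y)

theorem mollify_add_const (hf : Continuous f) (c : ℝ) (x : E) :
    mollify μ η (fun u => f u + c) x = mollify μ η f x + c := by
  simp only [mollify, add_mul]
  rw [integral_add (hη.integrable_comp_sub_mul hf x)
    (hη.integrable_mul (f := fun _ => c) continuous_const), integral_const_mul,
    hη.integral_eq_one, mul_one]

theorem mollify_add_of_forall_add_eq (hf : Continuous f) {v : E} {c : ℝ}
    (h : ∀ u, f (u + v) = f u + c) (x : E) :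
    mollify μ η f (x + v) = mollify μ η f x + c := by
  rw [← mollify_comp_add_right, ← hη.mollify_add_const hf]
  simp only [h]

end IsMollifier

end

section

variable {E : Type*} [NormedAddCommGroup E] [InnerProductSpace ℝ E]

def minInner (P : Finset E) (hP : P.Nonempty) (u : E) : ℝ := P.inf' hP fun y => ⟪y, u⟫

variable {P Q : Finset E} {hP : P.Nonempty} {hQ : Q.Nonempty}

theorem continuous_minInner : Continuous (minInner P hP) :=
  Continuous.finset_inf'_apply hP fun _ _ => continuous_const.inner continuous_id

theorem minInner_le {y : E} (hy : y ∈ P) (u : E) : minInner P hP u ≤ ⟪y, u⟫ :=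
  Finset.inf'_le _ hy

theorem minInner_anti (hQP : Q ⊆ P) (u : E) : minInner P hP u ≤ minInner Q hQ u :=
  Finset.inf'_mono _ hQP hQ

theorem minInner_add_smul_le (u w : E) {t : ℝ} (ht : 0 ≤ t) :
    minInner P hP (u + t • w) ≤ minInner P hP u + t * P.sup' hP fun y => ⟪y, w⟫ := by
  obtain ⟨y, hy, hyu⟩ := P.exists_mem_eq_inf' hP fun y => ⟪y, u⟫
  calc minInner P hP (u + t • w) ≤ ⟪y, u + t • w⟫ := minInner_le hy _
    _ = minInner P hP u + t * ⟪y, w⟫ := by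
      rw [inner_add_right, real_inner_smul_right, minInner, hyu]
    _ ≤ minInner P hP u + t * P.sup' hP fun y => ⟪y, w⟫ := by
      gcongr
      exact Finset.le_sup' (fun y => ⟪y, w⟫) hy

theorem minInner_add_of_forall_inner_eq {v : E} {c : ℝ} (h : ∀ y ∈ P, ⟪y, v⟫ = c) (u : E) :
    minInner P hP (u + v) = minInner P hP u + c := by
  rw [minInner, minInner, Finset.apply_inf'_eq_inf'_comp hP (· + c)
    fun a b => (min_add_add_right a b c).symm]
  exact Finset.inf'_congr hP rfl fun y hy => by simp [inner_add_right, h y hy]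

theorem eventually_minInner_add_smul_eq (hQP : Q ⊆ P) {v : E} {c : ℝ}
    (hQv : ∀ y ∈ Q, ⟪y, v⟫ = c) (hPv : ∀ y ∈ P, y ∉ Q → c < ⟪y, v⟫) {K : Set E}
    (hK : IsCompact K) :
    ∀ᶠ T : ℝ in atTop, ∀ u ∈ K, minInner P hP (u + T • v) = minInner Q hQ (u + T • v) := by
  have hfar : ∀ y ∈ P, ∀ᶠ T : ℝ in atTop, ∀ u ∈ K,
      minInner Q hQ (u + T • v) ≤ ⟪y, u + T • v⟫ := by
    intro y hy
    by_cases hyQ : y ∈ Q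
    · exact Eventually.of_forall fun T u _ => minInner_le hyQ _
    obtain ⟨B, hB⟩ := hK.bddAbove_image
      (continuous_minInner.sub (continuous_const.inner continuous_id)).continuousOn
    have hgap : 0 < ⟪y, v⟫ - c := sub_pos.2 (hPv y hy hyQ)
    filter_upwards [eventually_ge_atTop (B / (⟪y, v⟫ - c))] with T hT u hu
    have hBu : minInner Q hQ u - ⟪y, u⟫ ≤ B := hB ⟨u, hu, rfl⟩
    have hBT : B ≤ T * (⟪y, v⟫ - c) := (div_le_iff₀ hgap).1 hT
    rw [minInner_add_of_forall_inner_eq (fun z hz => by rw [real_inner_smul_right, hQv z hz]),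
      inner_add_right, real_inner_smul_right]
    linarith
  filter_upwards [(eventually_all_finset P).2 hfar] with T hT u hu
  exact le_antisymm (minInner_anti hQP _) (Finset.le_inf' hP _ fun y hy => hT y hy u hu)

end

section

variable {E : Type*} [NormedAddCommGroup E] [InnerProductSpace ℝ E] [FiniteDimensional ℝ E]
  {ι : Type*} {S : Finset ι} {a : ι → E}

theorem isBounded_setOf_le_inner (hS : S.Nonempty) {W : Submodule ℝ E}
    (hW : ∀ v ∈ W, (∀ j ∈ S, 0 ≤ ⟪a j, v⟫) → v = 0) (c : ι → ℝ) :
    Bornology.IsBounded {x | x ∈ W ∧ ∀ j ∈ S, c j ≤ ⟪a j, x⟫} := by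
  have hK : IsCompact ((W : Set E) ∩ sphere 0 1) :=
    (isCompact_sphere 0 1).inter_left W.closed_of_finiteDimensional
  have hcont : Continuous fun v => -S.inf' hS fun j => ⟪a j, v⟫ :=
    (Continuous.finset_inf'_apply hS fun _ _ => continuous_const.inner continuous_id).neg
  obtain ⟨δ, hδ, hδK⟩ := hK.exists_forall_le' hcont.continuousOn (a := 0) fun v hv => by
    by_contra! hv0
    have : v = 0 := hW v hv.1 fun j hj => (neg_nonpos.1 hv0).trans (Finset.inf'_le _ hj)
    simp [this] at hv
  refine isBounded_iff_forall_norm_le.2 ⟨(∑ j ∈ S, |c j|) / δ, fun x ⟨hxW, hxc⟩ => ?_⟩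
  rcases eq_or_ne x 0 with rfl | hx
  · simp only [norm_zero]
    positivity
  have hu : ‖x‖⁻¹ • x ∈ (W : Set E) ∩ sphere 0 1 :=
    ⟨W.smul_mem _ hxW, by simp [norm_smul, hx]⟩
  obtain ⟨j, hj, hju⟩ := S.exists_mem_eq_inf' hS fun j => ⟪a j, ‖x‖⁻¹ • x⟫
  have hδj : δ ≤ -(‖x‖⁻¹ * ⟪a j, x⟫) := by
    have := hδK _ hu
    rwa [hju, real_inner_smul_right] at this
  have hcj : -c j ≤ ∑ j ∈ S, |c j| :=
    (neg_le_abs _).trans (Finset.single_le_sum (fun j _ => abs_nonneg (c j)) hj)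
  rw [le_div_iff₀ hδ]
  have hxpos : 0 < ‖x‖ := norm_pos_iff.2 hx
  have : ‖x‖ * δ ≤ -⟪a j, x⟫ := by
    calc ‖x‖ * δ ≤ ‖x‖ * -(‖x‖⁻¹ * ⟪a j, x⟫) := by gcongr
      _ = -⟪a j, x⟫ := by field_simp
  linarith [hxc j hj]

theorem exists_forall_ge_of_le_inner_add {G : E → ℝ} (hG : Continuous G) (hS : S.Nonempty)
    {C : ι → ℝ} (hle : ∀ j ∈ S, ∀ x, G x ≤ ⟪a j, x⟫ + C j)
    (hinv : ∀ x v, (∀ j ∈ S, ⟪a j, v⟫ = 0) → G (x + v) = G x)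
    (hrec : ∀ v, (∀ j ∈ S, 0 ≤ ⟪a j, v⟫) → ∀ j ∈ S, ⟪a j, v⟫ = 0) :
    ∃ x, ∀ y, G y ≤ G x := by
  set L : Submodule ℝ E := ⨅ j ∈ S, LinearMap.ker (innerₛₗ ℝ (a j))
  have hL : ∀ v, v ∈ L ↔ ∀ j ∈ S, ⟪a j, v⟫ = 0 := by simp [L]
  have hproj : ∀ y, G (y - L.starProjection y) = G y := fun y => by
    conv_rhs => rw [← sub_add_cancel y (L.starProjection y)]
    exact (hinv _ _ ((hL _).1 (L.starProjection_apply_mem y))).symm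
  set A := {x | x ∈ Lᗮ ∧ G 0 ≤ G x}
  have hA : IsCompact A := by
    refine Metric.isCompact_of_isClosed_isBounded
      (L.isClosed_orthogonal.inter (isClosed_le continuous_const hG)) ?_
    refine (isBounded_setOf_le_inner hS (a := a) (W := Lᗮ) (fun v hvW hv => ?_)
      fun j => G 0 - C j).subset fun x ⟨hxW, hx⟩ => ⟨hxW, fun j hj => ?_⟩
    · have hvL : v ∈ L ⊓ Lᗮ := ⟨(hL v).2 (hrec v hv), hvW⟩
      rwa [L.inf_orthogonal_eq_bot, Submodule.mem_bot] at hvL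
    · linarith [hle j hj x]
  obtain ⟨z, hzA, hz⟩ := hA.exists_isMaxOn ⟨0, Lᗮ.zero_mem, le_rfl⟩ hG.continuousOn
  refine ⟨z, fun y => ?_⟩
  rw [← hproj y]
  by_cases hy : G 0 ≤ G (y - L.starProjection y)
  · exact hz ⟨L.sub_starProjection_mem_orthogonal y, hy⟩
  · exact (not_le.1 hy).le.trans hzA.2

end

namespace IsMollifier

variable {E : Type*} [NormedAddCommGroup E] [InnerProductSpace ℝ E] [FiniteDimensional ℝ E]
  [MeasurableSpace E] [BorelSpace E] {μ : Measure E} {ε : ℝ}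
  {η : E → ℝ} (hη : IsMollifier μ ε η) {P Q : Finset E} {hP : P.Nonempty} {hQ : Q.Nonempty}
include hη

theorem exists_forall_ge_sub_inner_of_face [IsFiniteMeasureOnCompacts μ] (hQP : Q ⊆ P)
    {p v : E} (hQv : ∀ y ∈ Q, ⟪y, v⟫ = ⟪p, v⟫) (hPv : ∀ y ∈ P, y ∉ Q → ⟪p, v⟫ < ⟪y, v⟫) {x₀ : E}
    (hx₀ : ∀ y, mollify μ η (minInner Q hQ) y - ⟪p, y⟫ ≤
      mollify μ η (minInner Q hQ) x₀ - ⟪p, x₀⟫) :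
    ∃ x, ∀ y, mollify μ η (minInner P hP) y - ⟪p, y⟫ ≤
      mollify μ η (minInner P hP) x - ⟪p, x⟫ := by
  obtain ⟨T, hT⟩ :=
    (eventually_minInner_add_smul_eq (hP := hP) hQP hQv hPv (isCompact_closedBall x₀ ε)).exists
  have hfar : mollify μ η (minInner P hP) (x₀ + T • v) =
      mollify μ η (minInner Q hQ) (x₀ + T • v) :=
    mollify_congr hη.support_subset fun y hy => by
      rw [show x₀ + T • v - y = x₀ - y + T • v by abel]
      exact hT _ (by simpa [dist_eq_norm] using hy)
  have hshift : mollify μ η (minInner Q hQ) (x₀ + T • v) =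
      mollify μ η (minInner Q hQ) x₀ + T * ⟪p, v⟫ :=
    hη.mollify_add_of_forall_add_eq continuous_minInner
      (minInner_add_of_forall_inner_eq fun y hy => by rw [real_inner_smul_right, hQv y hy]) x₀
  refine ⟨x₀ + T • v, fun y => ?_⟩
  calc mollify μ η (minInner P hP) y - ⟪p, y⟫
      ≤ mollify μ η (minInner Q hQ) y - ⟪p, y⟫ := by
        gcongr
        exact hη.mollify_mono continuous_minInner continuous_minInner (minInner_anti hQP) y
    _ ≤ mollify μ η (minInner Q hQ) x₀ - ⟪p, x₀⟫ := hx₀ y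
    _ = mollify μ η (minInner P hP) (x₀ + T • v) - ⟪p, x₀ + T • v⟫ := by
        rw [hfar, hshift, inner_add_right, real_inner_smul_right]
        ring

theorem continuous_mollify [μ.IsAddHaarMeasure] {f : E → ℝ} (hf : Continuous f) :
    Continuous (mollify μ η f) :=
  (contDiff_mollify (n := 0) (contDiff_zero.2 hη.continuous) hη.hasCompactSupport hf).continuous

theorem differentiable_mollify [μ.IsAddHaarMeasure] (hη₁ : ContDiff ℝ 1 η) {f : E → ℝ}
    (hf : Continuous f) : Differentiable ℝ (mollify μ η f) :=
  (contDiff_mollify hη₁ hη.hasCompactSupport hf).differentiable one_ne_zero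

theorem exists_forall_ge_sub_inner_of_not_face [μ.IsAddHaarMeasure] {p : E}
    (hface : ∀ v, (∀ y ∈ P, ⟪p, v⟫ ≤ ⟪y, v⟫) → ∀ y ∈ P, ⟪y, v⟫ ≤ ⟪p, v⟫) :
    ∃ x, ∀ y, mollify μ η (minInner P hP) y - ⟪p, y⟫ ≤
      mollify μ η (minInner P hP) x - ⟪p, x⟫ := by
  have hlin (z x : E) : mollify μ η (⟪z, ·⟫) x = ⟪z, x⟫ + mollify μ η (⟪z, ·⟫) 0 := by
    simpa [add_comm] using hη.mollify_add_of_forall_add_eq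
      (continuous_const.inner continuous_id) (fun u => inner_add_right z u x) 0
  refine exists_forall_ge_of_le_inner_add (S := P) (a := fun y => y - p)
    (C := fun y => mollify μ η (⟪y, ·⟫) 0)
    ((hη.continuous_mollify continuous_minInner).sub (continuous_const.inner continuous_id)) hP
    (fun y hy x => ?_) (fun x v hv => ?_) fun v hv y hy => ?_
  · have := hη.mollify_mono (g := (⟪y, ·⟫)) continuous_minInner
      (continuous_const.inner continuous_id) (minInner_le (hP := hP) hy) x
    rw [hlin y x] at this
    linarith [inner_sub_left (𝕜 := ℝ) y p x]
  · have hPv : ∀ y ∈ P, ⟪y, v⟫ = ⟪p, v⟫ := fun y hy => by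
      linarith [hv y hy, inner_sub_left (𝕜 := ℝ) y p v]
    rw [hη.mollify_add_of_forall_add_eq continuous_minInner
      (minInner_add_of_forall_inner_eq hPv) x, inner_add_right]
    ring
  · have hle := hface v fun z hz => by linarith [hv z hz, inner_sub_left (𝕜 := ℝ) z p v]
    linarith [hle y hy, hv y hy, inner_sub_left (𝕜 := ℝ) y p v]

theorem exists_forall_ge_sub_inner [μ.IsAddHaarMeasure] {p : E}
    (hp : p ∈ convexHull ℝ (P : Set E)) :
    ∃ x, ∀ y, mollify μ η (minInner P hP) y - ⟪p, y⟫ ≤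
      mollify μ η (minInner P hP) x - ⟪p, x⟫ := by
  classical
  induction P using Finset.strongInduction with
  | H P ih =>
  by_cases hface : ∃ v, (∀ y ∈ P, ⟪p, v⟫ ≤ ⟪y, v⟫) ∧ ∃ y ∈ P, ⟪p, v⟫ < ⟪y, v⟫
  · obtain ⟨v, hv, y₀, hy₀, hy₀v⟩ := hface
    have hpQ := mem_convexHull_filter_of_inner_le hp hv
    have hQ := Finset.coe_nonempty.1 (convexHull_nonempty_iff.1 ⟨p, hpQ⟩)
    obtain ⟨x₀, hx₀⟩ := ih _ (Finset.filter_ssubset.2 ⟨y₀, hy₀, hy₀v.ne'⟩) hpQ (hP := hQ)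
    exact hη.exists_forall_ge_sub_inner_of_face (Finset.filter_subset _ P)
      (fun y hy => (Finset.mem_filter.1 hy).2)
      (fun y hy hyQ => (hv y hy).lt_of_ne fun h => hyQ (Finset.mem_filter.2 ⟨hy, h.symm⟩)) hx₀
  · push Not at hface
    exact hη.exists_forall_ge_sub_inner_of_not_face hface

theorem gradient_mollify_minInner_mem [μ.IsAddHaarMeasure] (hη₁ : ContDiff ℝ 1 η) (x : E) :
    gradient (mollify μ η (minInner P hP)) x ∈ convexHull ℝ (P : Set E) := by
  refine mem_convexHull_of_forall_inner_le_sup' hP fun w => inner_le_of_hasGradientAt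
    (hη.differentiable_mollify hη₁ continuous_minInner x).hasGradientAt fun t ht => ?_
  rw [← mollify_comp_add_right, ← hη.mollify_add_const continuous_minInner]
  exact hη.mollify_mono (continuous_minInner.comp (continuous_add_const _))
    (continuous_minInner.add continuous_const) (fun u => minInner_add_smul_le u w ht.le) x

theorem range_gradient_mollify_minInner [μ.IsAddHaarMeasure] (hη₁ : ContDiff ℝ 1 η) :
    range (gradient (mollify μ η (minInner P hP))) = convexHull ℝ (P : Set E) := by
  refine Subset.antisymm (range_subset_iff.2 (hη.gradient_mollify_minInner_mem hη₁))
    fun p hp => ?_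
  obtain ⟨x, hx⟩ := hη.exists_forall_ge_sub_inner hp
  exact ⟨x, gradient_eq_of_forall_sub_inner_le
    (hη.differentiable_mollify hη₁ continuous_minInner x) hx⟩

end IsMollifier

theorem statement2_general (n : ℕ)
    (ι : Type) [Fintype ι] [Nonempty ι]
    (m : ι → EuclideanSpace ℝ (Fin n))
    (F : EuclideanSpace ℝ (Fin n) → ℝ)
    (hF : ∀ u, F u = Finset.univ.inf' Finset.univ_nonempty fun j => ⟪m j, u⟫)
    (ε : ℝ)
    (η : EuclideanSpace ℝ (Fin n) → ℝ)
    (hηsmooth : ContDiff ℝ (⊤ : ℕ∞) η)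
    (hηnonneg : ∀ y, 0 ≤ η y)
    (hηsupp : Function.support η ⊆ Metric.closedBall 0 ε)
    (hηone : ∫ y, η y = 1)
    (H : EuclideanSpace ℝ (Fin n) → ℝ)
    (hH : ∀ x, H x = ∫ y, F (x - y) * η y) :
    ContDiff ℝ (⊤ : ℕ∞) H ∧ Set.range (gradient H) = convexHull ℝ (Set.range m) := by
  classical
  have hP : (Finset.univ.image m).Nonempty := Finset.univ_nonempty.image m
  have hFP : F = minInner (Finset.univ.image m) hP := by
    funext u
    rw [hF, minInner, Finset.inf'_image]
    rfl
  have hHF : H = mollify volume η (minInner (Finset.univ.image m) hP) := by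
    funext x
    rw [hH, mollify, hFP]
  have hη : IsMollifier volume ε η := ⟨hηsmooth.continuous, hηnonneg, hηsupp, hηone⟩
  rw [hHF, show Set.range m = (Finset.univ.image m : Set _) by simp]
  exact ⟨contDiff_mollify hηsmooth hη.hasCompactSupport continuous_minInner,
    hη.range_gradient_mollify_minInner (hηsmooth.of_le (by simp))⟩

/-- Let `F(u) = min_j ⟪m j, u⟫` be a strictly concave piecewise linear
function (each linear piece is attained strictly somewhere, and the convex hull of the slopes
is full-dimensional).  Then for any smooth nonnegative mollifier `η` supported in the closed
`ε`-ball with total integral `1`, the mollification `H = F ⋆ η` is smooth and the range of its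
gradient map is exactly the polytope `convexHull {m j}`. -/
theorem statement2 (n : ℕ) (hn : 1 ≤ n)
    (ι : Type) [Fintype ι] [Nonempty ι]
    (m : ι → EuclideanSpace ℝ (Fin n))
    (ha : ∀ j, ∃ u : EuclideanSpace ℝ (Fin n), ∀ l, l ≠ j → ⟪m j, u⟫ < ⟪m l, u⟫)
    (hb : (interior (convexHull ℝ (Set.range m))).Nonempty)
    (F : EuclideanSpace ℝ (Fin n) → ℝ)
    (hF : ∀ u, F u = Finset.univ.inf' Finset.univ_nonempty fun j => ⟪m j, u⟫)
    (ε : ℝ) (hε : 0 < ε)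
    (η : EuclideanSpace ℝ (Fin n) → ℝ)
    (hηsmooth : ContDiff ℝ (⊤ : ℕ∞) η)
    (hηnonneg : ∀ y, 0 ≤ η y)
    (hηsupp : Function.support η ⊆ Metric.closedBall 0 ε)
    (hηone : ∫ y, η y = 1)
    (H : EuclideanSpace ℝ (Fin n) → ℝ)
    (hH : ∀ x, H x = ∫ y, F (x - y) * η y) :
    ContDiff ℝ (⊤ : ℕ∞) H ∧ Set.range (gradient H) = convexHull ℝ (Set.range m) :=
  statement2_general n ι m F hF ε η hηsmooth hηnonneg hηsupp hηone H hH
end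

section
/- Let n ≥ 1, let 0 < ε < ε′, and let η : ℝⁿ → ℝ be integrable with ∫ η = 1 and with support contained in the closed ball of radius ε about 0. Let F : ℝⁿ → ℝ be continuous, let x, v ∈ ℝⁿ and c ∈ ℝ, and suppose that F(z + s·v) = F(z) + c·s whenever z and z + s·v both lie in the closed ball of radius ε′ about x. Then the mollification H = F ⋆ η satisfies H(x + s·v) = H(x) + c·s for every s ∈ ℝ with |s|·‖v‖ ≤ ε′ − ε. In particular, the directional derivative of H at x in the direction v equals c. -/
open scoped RealInnerProductSpace
open MeasureTheory

/-- If a continuous function `F` has constant directional increment `c` in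
direction `v` on the closed `ε′`-ball about `x`, then its mollification `H = F ⋆ η` by an
integrable kernel of total integral `1` supported in the closed `ε`-ball (`ε < ε′`) satisfies
`H(x + s·v) = H(x) + c·s` whenever `|s|·‖v‖ ≤ ε′ − ε`; in particular the line derivative of
`H` at `x` in direction `v` equals `c`. -/
theorem statement5 (n : ℕ) (hn : 1 ≤ n) (ε ε' : ℝ) (hε : 0 < ε) (hεε' : ε < ε')
    (η : EuclideanSpace ℝ (Fin n) → ℝ)
    (hηint : Integrable η)
    (hηone : ∫ y, η y = 1)
    (hηsupp : Function.support η ⊆ Metric.closedBall 0 ε)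
    (F : EuclideanSpace ℝ (Fin n) → ℝ) (hF : Continuous F)
    (x v : EuclideanSpace ℝ (Fin n)) (c : ℝ)
    (hdir : ∀ (z : EuclideanSpace ℝ (Fin n)) (s : ℝ),
      z ∈ Metric.closedBall x ε' → z + s • v ∈ Metric.closedBall x ε' →
      F (z + s • v) = F z + c * s)
    (H : EuclideanSpace ℝ (Fin n) → ℝ)
    (hH : ∀ y, H y = ∫ z, F (y - z) * η z) :
    (∀ s : ℝ, |s| * ‖v‖ ≤ ε' - ε → H (x + s • v) = H x + c * s) ∧
    HasLineDerivAt ℝ H c x v := by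
  have hkey : ∀ s : ℝ, |s| * ‖v‖ ≤ ε' - ε → H (x + s • v) = H x + c * s := by
    intro s hs
    -- pointwise identity of integrands
    have key : ∀ z, F (x + s • v - z) * η z = F (x - z) * η z + (c * s) * η z := by
      intro z
      by_cases hz : η z = 0
      · simp [hz]
      · have hzε : z ∈ Metric.closedBall (0 : EuclideanSpace ℝ (Fin n)) ε :=
          hηsupp (Function.mem_support.mpr hz)
        have hznorm : ‖z‖ ≤ ε := by simpa using hzε
        have h1 : x - z ∈ Metric.closedBall x ε' := by
          simp only [Metric.mem_closedBall, dist_eq_norm]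
          have : x - z - x = -z := by abel
          rw [this, norm_neg]
          linarith
        have h2 : x - z + s • v ∈ Metric.closedBall x ε' := by
          simp only [Metric.mem_closedBall, dist_eq_norm]
          have : x - z + s • v - x = s • v + (-z) := by abel
          rw [this]
          calc ‖s • v + (-z)‖ ≤ ‖s • v‖ + ‖(-z)‖ := norm_add_le _ _
            _ = |s| * ‖v‖ + ‖z‖ := by rw [norm_smul, norm_neg, Real.norm_eq_abs]
            _ ≤ (ε' - ε) + ε := add_le_add hs hznorm
            _ = ε' := by ring
        have heq := hdir (x - z) s h1 h2
        have hxz : x + s • v - z = x - z + s • v := by abel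
        rw [hxz, heq]; ring
    -- integrability of the main term
    obtain ⟨C, hC⟩ := (isCompact_closedBall
        (0 : EuclideanSpace ℝ (Fin n)) ε).exists_bound_of_continuousOn
        ((hF.comp (continuous_const.sub continuous_id)).continuousOn)
    have hmeas : AEStronglyMeasurable (fun z => F (x - z) * η z) volume :=
      ((hF.comp (continuous_const.sub continuous_id)).aestronglyMeasurable).mul
        hηint.aestronglyMeasurable
    have hFint : Integrable (fun z => F (x - z) * η z) := by
      refine Integrable.mono' (hηint.norm.const_mul C) hmeas (Filter.Eventually.of_forall ?_)
      intro z
      by_cases hz : η z = 0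
      · simp [hz]
      · have hzε : z ∈ Metric.closedBall (0 : EuclideanSpace ℝ (Fin n)) ε :=
          hηsupp (Function.mem_support.mpr hz)
        have hb := hC z hzε
        simp only [Function.comp] at hb
        calc ‖F (x - z) * η z‖ = ‖F (x - z)‖ * ‖η z‖ := norm_mul _ _
          _ ≤ C * ‖η z‖ := by
              exact mul_le_mul_of_nonneg_right hb (norm_nonneg _)
    have hcsint : Integrable (fun z => (c * s) * η z) := hηint.const_mul _
    calc H (x + s • v) = ∫ z, F (x + s • v - z) * η z := hH _
      _ = ∫ z, (F (x - z) * η z + (c * s) * η z) := by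
          exact integral_congr_ae (Filter.Eventually.of_forall key)
      _ = (∫ z, F (x - z) * η z) + ∫ z, (c * s) * η z := integral_add hFint hcsint
      _ = H x + c * s := by
          rw [integral_const_mul, hηone, ← hH x]; ring
  refine ⟨hkey, ?_⟩
  have hδ : 0 < (ε' - ε) / (‖v‖ + 1) := by
    apply div_pos (by linarith) (by positivity)
  have hlin : HasDerivAt (fun t : ℝ => H x + c * t) c 0 := by
    simpa using ((hasDerivAt_id (0 : ℝ)).const_mul c).const_add (H x)
  have heq : (fun t : ℝ => H (x + t • v)) =ᶠ[nhds (0 : ℝ)] (fun t => H x + c * t) := by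
    filter_upwards [Metric.ball_mem_nhds (0 : ℝ) hδ] with t ht
    have ht' : |t| < (ε' - ε) / (‖v‖ + 1) := by
      simpa [Real.dist_eq] using ht
    apply hkey
    have h1 : |t| * (‖v‖ + 1) < ε' - ε := by
      rw [← lt_div_iff₀ (by positivity)]; exact ht'
    nlinarith [abs_nonneg t, norm_nonneg v]
  show HasDerivAt (fun t : ℝ => H (x + t • v)) c 0
  exact hlin.congr_of_eventuallyEq heq
end

section
/- Let n ≥ 1, let ι be a nonempty finite index set, let m : ι → ℝⁿ and b : ι → ℝ, and define the concave piecewise linear function F(u) = min_{j ∈ ι} (⟨m_j, u⟩ + b_j). Let ε > 0 and let η : ℝⁿ → ℝ be C^∞, nonnegative, with support contained in the closed ball of radius ε about 0 and with ∫ η = 1. Then H = F ⋆ η is smooth and for every x ∈ ℝⁿ, the gradient ∇H(x) lies in the convex hull of the set {m_j : j ∈ ι and there exists y in the closed ball of radius ε about x with F(y) = ⟨m_j, y⟩ + b_j}. -/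
/-!
Each affine piece `u ↦ ⟪m j, u⟫ + b j` that is active at a point `u` is a supergradient of the
minimum `F` there: `F w - F u ≤ ⟪m j, w - u⟫`. Averaging this against `η`, only points
`x - y` with `‖y‖ ≤ ε` contribute, so `H (x + t • v) - H x ≤ t * max ⟪m j, v⟫` over the pieces
active in the `ε`-ball about `x`. Differentiating at `t = 0` gives `⟪∇H x, v⟫ ≤ max ⟪m j, v⟫`
for every direction `v`, and by separation a point satisfying all these inequalities lies in
the convex hull of the active slopes.
-/

open scoped RealInnerProductSpace
open MeasureTheory

theorem mem_convexHull_of_forall_exists_inner_le {E : Type*} [NormedAddCommGroup E]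
    [InnerProductSpace ℝ E] [CompleteSpace E] {s : Set E} (hs : s.Finite) {x : E}
    (h : ∀ v, ∃ y ∈ s, ⟪x, v⟫ ≤ ⟪y, v⟫) : x ∈ convexHull ℝ s := by
  by_contra hx
  obtain ⟨f, u, hfs, hfx⟩ :=
    geometric_hahn_banach_closed_point (convex_convexHull ℝ s) (hs.isClosed_convexHull ℝ) hx
  obtain ⟨y, hys, hxy⟩ := h ((InnerProductSpace.toDual ℝ E).symm f)
  have hfy := hfs y (subset_convexHull ℝ s hys)
  rw [real_inner_comm, InnerProductSpace.toDual_symm_apply, real_inner_comm,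
    InnerProductSpace.toDual_symm_apply] at hxy
  linarith

theorem HasFDerivAt.apply_le_of_forall_sub_le {E : Type*} [NormedAddCommGroup E]
    [NormedSpace ℝ E] {H : E → ℝ} {f : E →L[ℝ] ℝ} {x : E} (hH : HasFDerivAt H f x) (v : E)
    {M : ℝ} (hM : ∀ t > 0, H (x + t • v) - H x ≤ t * M) : f v ≤ M := by
  have hline : HasDerivAt (fun t : ℝ => H (x + t • v)) (f v) 0 := by
    have hpath : HasDerivAt (fun t : ℝ => x + t • v) v 0 :=
      ((hasDerivAt_id (0 : ℝ)).smul_const v).const_add x |>.congr_deriv (one_smul ℝ v)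
    exact (by simpa using hH : HasFDerivAt H f (x + (0 : ℝ) • v)).comp_hasDerivAt 0 hpath
  have hslope := (hasDerivAt_iff_tendsto_slope.mp hline).mono_left
    (nhdsWithin_mono (0 : ℝ) fun t (ht : t ∈ Set.Ioi 0) => ne_of_gt ht)
  refine le_of_tendsto hslope ?_
  filter_upwards [self_mem_nhdsWithin] with t (ht : 0 < t)
  rw [slope_def_field, zero_smul, add_zero, sub_zero, div_le_iff₀ ht, mul_comm]
  exact hM t ht

theorem integral_mul_sub_integral_mul_le {α : Type*} [MeasurableSpace α] {μ : Measure α}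
    {f g η : α → ℝ} (hf : Integrable (fun y => f y * η y) μ)
    (hg : Integrable (fun y => g y * η y) μ) (hη : Integrable η μ) (hη_nonneg : ∀ y, 0 ≤ η y)
    (hη_one : ∫ y, η y ∂μ = 1) {c : ℝ} (hfg : ∀ y ∈ Function.support η, f y - g y ≤ c) :
    ∫ y, f y * η y ∂μ - ∫ y, g y * η y ∂μ ≤ c := by
  rw [← integral_sub hf hg]
  calc ∫ y, (f y * η y - g y * η y) ∂μ ≤ ∫ y, c * η y ∂μ := by
        refine integral_mono (hf.sub hg) (hη.const_mul c) fun y => ?_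
        rcases eq_or_ne (η y) 0 with hy | hy
        · simp [hy]
        · rw [← sub_mul]
          exact mul_le_mul_of_nonneg_right (hfg y hy) (hη_nonneg y)
    _ = c := by rw [integral_const_mul, hη_one, mul_one]

section MinAffine

variable {E : Type*} [NormedAddCommGroup E] [InnerProductSpace ℝ E]
  {ι : Type*} [Fintype ι] [Nonempty ι]

noncomputable def minAffine (m : ι → E) (b : ι → ℝ) (u : E) : ℝ :=
  Finset.univ.inf' Finset.univ_nonempty fun j => ⟪m j, u⟫ + b j

variable (m : ι → E) (b : ι → ℝ)

theorem continuous_minAffine : Continuous (minAffine m b) :=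
  continuous_iff_continuousAt.mpr fun _ =>
    ContinuousAt.finset_inf'_apply Finset.univ_nonempty fun _ _ =>
      ((continuous_const.inner continuous_id).add continuous_const).continuousAt

theorem exists_minAffine_eq (u : E) : ∃ j, minAffine m b u = ⟪m j, u⟫ + b j := by
  obtain ⟨j, -, hj⟩ := Finset.exists_mem_eq_inf' Finset.univ_nonempty fun j => ⟪m j, u⟫ + b j
  exact ⟨j, hj⟩

theorem minAffine_sub_le_inner {u : E} {j : ι} (hj : minAffine m b u = ⟪m j, u⟫ + b j)
    (w : E) : minAffine m b w - minAffine m b u ≤ ⟪m j, w - u⟫ := by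
  have hw : minAffine m b w ≤ ⟪m j, w⟫ + b j := Finset.inf'_le _ (Finset.mem_univ j)
  rw [inner_sub_right]
  linarith

theorem integral_minAffine_sub_mul_sub_le [MeasurableSpace E] [OpensMeasurableSpace E]
    {μ : Measure E} [IsFiniteMeasureOnCompacts μ] {η : E → ℝ} (hη : Continuous η)
    (hη_cs : HasCompactSupport η) (hη_nonneg : ∀ y, 0 ≤ η y) (hη_one : ∫ y, η y ∂μ = 1)
    {ε : ℝ} (hη_supp : Function.support η ⊆ Metric.closedBall 0 ε) {x v : E} {c : ℝ}
    (hc : ∀ j, ∀ y ∈ Metric.closedBall x ε, minAffine m b y = ⟪m j, y⟫ + b j → ⟪m j, v⟫ ≤ c)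
    {t : ℝ} (ht : 0 ≤ t) :
    ∫ y, minAffine m b (x + t • v - y) * η y ∂μ - ∫ y, minAffine m b (x - y) * η y ∂μ
      ≤ t * c := by
  have hint : ∀ w, Integrable (fun y => minAffine m b (w - y) * η y) μ := fun w =>
    ((continuous_minAffine m b).comp (continuous_const.sub continuous_id)).mul hη
      |>.integrable_of_hasCompactSupport hη_cs.mul_left
  refine integral_mul_sub_integral_mul_le (hint _) (hint _)
    (hη.integrable_of_hasCompactSupport hη_cs) hη_nonneg hη_one fun y hy => ?_
  obtain ⟨j, hj⟩ := exists_minAffine_eq m b (x - y)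
  have hxy : x - y ∈ Metric.closedBall x ε := by simpa using hη_supp hy
  calc minAffine m b (x + t • v - y) - minAffine m b (x - y)
      ≤ ⟪m j, (x + t • v - y) - (x - y)⟫ := minAffine_sub_le_inner m b hj _
    _ = t * ⟪m j, v⟫ := by
      rw [sub_sub_sub_cancel_right, add_sub_cancel_left, real_inner_smul_right]
    _ ≤ t * c := mul_le_mul_of_nonneg_left (hc j _ hxy hj) ht

end MinAffine

theorem statement6_general (n : ℕ)
    (ι : Type) [Fintype ι] [Nonempty ι]
    (m : ι → EuclideanSpace ℝ (Fin n)) (b : ι → ℝ)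
    (F : EuclideanSpace ℝ (Fin n) → ℝ)
    (hF : ∀ u, F u = Finset.univ.inf' Finset.univ_nonempty fun j => ⟪m j, u⟫ + b j)
    (ε : ℝ) (hε : 0 < ε)
    (η : EuclideanSpace ℝ (Fin n) → ℝ)
    (hηsmooth : ContDiff ℝ (⊤ : ℕ∞) η)
    (hηnonneg : ∀ y, 0 ≤ η y)
    (hηsupp : Function.support η ⊆ Metric.closedBall 0 ε)
    (hηone : ∫ y, η y = 1)
    (H : EuclideanSpace ℝ (Fin n) → ℝ)
    (hH : ∀ x, H x = ∫ y, F (x - y) * η y) :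
    ContDiff ℝ (⊤ : ℕ∞) H ∧
    ∀ x, gradient H x ∈ convexHull ℝ
      {v : EuclideanSpace ℝ (Fin n) | ∃ j,
        (∃ y ∈ Metric.closedBall x ε, F y = ⟪m j, y⟫ + b j) ∧ v = m j} := by
  obtain rfl : F = minAffine m b := funext hF
  have hηcs : HasCompactSupport η :=
    .of_support_subset_isCompact (isCompact_closedBall 0 ε) hηsupp
  have hHsmooth : ContDiff ℝ (⊤ : ℕ∞) H := by
    have hconv : H = convolution η (minAffine m b) (ContinuousLinearMap.mul ℝ ℝ) volume := by
      funext x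
      simp only [hH, convolution_def, ContinuousLinearMap.mul_apply', mul_comm]
    exact hconv ▸ hηcs.contDiff_convolution_left _ hηsmooth
      (continuous_minAffine m b).locallyIntegrable
  refine ⟨hHsmooth, fun x => ?_⟩
  refine mem_convexHull_of_forall_exists_inner_le
    ((Set.finite_range m).subset (by rintro _ ⟨j, -, rfl⟩; exact ⟨j, rfl⟩)) fun v => ?_
  obtain ⟨j, hj⟩ := exists_minAffine_eq m b x
  obtain ⟨j₀, ⟨y₀, hy₀, hj₀⟩, hmax⟩ := Set.exists_max_image
    {j | ∃ y ∈ Metric.closedBall x ε, minAffine m b y = ⟪m j, y⟫ + b j} (⟪m ·, v⟫)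
    (Set.toFinite _) ⟨j, x, Metric.mem_closedBall_self hε.le, hj⟩
  refine ⟨m j₀, ⟨j₀, ⟨y₀, hy₀, hj₀⟩, rfl⟩, ?_⟩
  rw [gradient, InnerProductSpace.toDual_symm_apply]
  refine (hHsmooth.differentiable (by simp) x).hasFDerivAt.apply_le_of_forall_sub_le v
    fun t ht => ?_
  rw [hH, hH]
  exact integral_minAffine_sub_mul_sub_le m b hηsmooth.continuous hηcs hηnonneg hηone hηsupp
    (fun j y hy hj => hmax j ⟨y, hy, hj⟩) ht.le

/-- For the concave piecewise linear function
`F(u) = min_j (⟪m j, u⟫ + b j)` and a smooth nonnegative mollifier `η` supported in the closed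
`ε`-ball with total integral `1`, the mollification `H = F ⋆ η` is smooth and its gradient at
any point `x` lies in the convex hull of the slopes `m j` of those linear pieces that are
active somewhere in the closed `ε`-ball about `x`. -/
theorem statement6 (n : ℕ) (hn : 1 ≤ n)
    (ι : Type) [Fintype ι] [Nonempty ι]
    (m : ι → EuclideanSpace ℝ (Fin n)) (b : ι → ℝ)
    (F : EuclideanSpace ℝ (Fin n) → ℝ)
    (hF : ∀ u, F u = Finset.univ.inf' Finset.univ_nonempty fun j => ⟪m j, u⟫ + b j)
    (ε : ℝ) (hε : 0 < ε)
    (η : EuclideanSpace ℝ (Fin n) → ℝ)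
    (hηsmooth : ContDiff ℝ (⊤ : ℕ∞) η)
    (hηnonneg : ∀ y, 0 ≤ η y)
    (hηsupp : Function.support η ⊆ Metric.closedBall 0 ε)
    (hηone : ∫ y, η y = 1)
    (H : EuclideanSpace ℝ (Fin n) → ℝ)
    (hH : ∀ x, H x = ∫ y, F (x - y) * η y) :
    ContDiff ℝ (⊤ : ℕ∞) H ∧
    ∀ x, gradient H x ∈ convexHull ℝ
      {v : EuclideanSpace ℝ (Fin n) | ∃ j,
        (∃ y ∈ Metric.closedBall x ε, F y = ⟪m j, y⟫ + b j) ∧ v = m j} :=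
  statement6_general n ι m b F hF ε hε η hηsmooth hηnonneg hηsupp hηone H hH
end

section
/- Let n ≥ 1 and let A be a finite subset of ℝⁿ. For γ ∈ A let V_γ = {u ∈ ℝⁿ : ⟨δ, u⟩ ≤ ⟨γ, u⟩ for all δ ∈ A}, and for α, β ∈ A let H(α, β) = {u ∈ ℝⁿ : ⟨α, u⟩ = ⟨β, u⟩}. Then there exists c > 0 such that for all α, β ∈ A with α ≠ β, every p ∈ V_β, and every r > 0: if the Euclidean distance from p to the set V_α is at least r, then the Euclidean distance from p to the set H(α, β) is at least 2·c·r. -/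
open Filter Finset Metric ProperCone Topology
open scoped RealInnerProductSpace

/-!
Write `V α = {u | ⟪α - δ, u⟫ ≥ 0 for δ ∈ A}` as the inner dual of a finite set `G`. For
`p ∈ V β` every constraint of `V α` is violated by at most `s = ⟪β - α, p⟫`, while the distance
from `p` to the wall is at least `s / ‖β - α‖`. So it suffices to show Hoffman's error bound
`dist(p, innerDual G) ≤ m · s` for some `m` depending only on `G`.

Let `q` be the point of `innerDual G` nearest to `p` and `I ⊆ G` the constraints active at `q`.
Near `q` the cones `innerDual G` and `innerDual I` agree, so `q - p` lies in the double dual of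
`I`. On the unit sphere of that closed cone the function `v ↦ ∑ g ∈ I, max 0 ⟪g, v⟫` is
positive, hence bounded below by compactness; by homogeneity this bounds `‖q - p‖` by a multiple
of `s`. There are only finitely many `I`.
-/

variable {E : Type*} [NormedAddCommGroup E] [InnerProductSpace ℝ E]

def tropicalRegion (A : Finset E) (γ : E) : Set E := {u | ∀ δ ∈ A, ⟪δ, u⟫ ≤ ⟪γ, u⟫}

def tropicalWall (α β : E) : Set E := {u | ⟪α, u⟫ = ⟪β, u⟫}

theorem inner_sub_le_norm_mul_infDist_tropicalWall (α β p : E) :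
    ⟪β - α, p⟫ ≤ ‖β - α‖ * infDist p (tropicalWall α β) := by
  rcases eq_or_ne α β with rfl | hαβ
  · simp
  have hN : 0 < ‖β - α‖ := norm_sub_pos_iff.2 hαβ.symm
  rw [← div_le_iff₀' hN, le_infDist ⟨0, by simp [tropicalWall]⟩]
  intro y (hy : ⟪α, y⟫ = ⟪β, y⟫)
  rw [div_le_iff₀' hN, dist_eq_norm]
  calc ⟪β - α, p⟫ = ⟪β - α, p - y⟫ := by
        rw [inner_sub_right _ p y, inner_sub_left β α y, hy, sub_self, sub_zero]
    _ ≤ ‖β - α‖ * ‖p - y‖ := real_inner_le_norm _ _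

section CompleteSpace

variable [CompleteSpace E]

theorem tropicalRegion_eq_innerDual (A : Finset E) (α : E) :
    tropicalRegion A α = innerDual ((A.map (Equiv.subLeft α).toEmbedding : Finset E) : Set E) := by
  ext u
  simp [tropicalRegion, inner_sub_left]

theorem exists_pos_inner_of_mem_innerDual_innerDual {s : Set E} {v : E}
    (hv : v ∈ innerDual (innerDual s : Set E)) (hv0 : v ≠ 0) : ∃ g ∈ s, 0 < ⟪g, v⟫ := by
  by_contra! h
  have hneg : -v ∈ innerDual s := mem_innerDual.2 fun g hg => by
    rw [inner_neg_right]
    exact neg_nonneg.2 (h g hg)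
  have := mem_innerDual.1 hv hneg
  rw [inner_neg_left, neg_nonneg] at this
  exact hv0 (real_inner_self_nonpos.1 this)

theorem eventually_add_smul_mem_innerDual {G : Finset E} {q x : E}
    (hq : q ∈ innerDual (G : Set E))
    (hx : x ∈ innerDual (({g ∈ G | ⟪g, q⟫ = 0} : Finset E) : Set E)) :
    ∀ᶠ t in 𝓝[>] (0 : ℝ), q + t • x ∈ innerDual (G : Set E) := by
  simp only [mem_innerDual, Finset.mem_coe]
  refine (eventually_all_finset G).2 fun g hg => ?_
  rcases (mem_innerDual.1 hq hg).eq_or_lt with hgq | hgq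
  · have hgx : 0 ≤ ⟪g, x⟫ := mem_innerDual.1 hx (by simp [hg, hgq])
    filter_upwards [self_mem_nhdsWithin] with t (ht : 0 < t)
    rw [inner_add_right, ← hgq, zero_add, real_inner_smul_right]
    positivity
  · have hcont : Continuous fun t : ℝ => ⟪g, q + t • x⟫ := by fun_prop
    have := (hcont.tendsto' 0 _ (by simp)).eventually (eventually_gt_nhds hgq)
    exact nhdsWithin_le_nhds (this.mono fun _ h => h.le)

end CompleteSpace

section FiniteDimensional

variable [FiniteDimensional ℝ E]

theorem ProperCone.exists_pos_mul_norm_le (K : ProperCone ℝ E) {F : E → ℝ} (hF : Continuous F)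
    (hF_smul : ∀ c : ℝ, 0 ≤ c → ∀ v, F (c • v) = c * F v)
    (hF_pos : ∀ v ∈ K, v ≠ 0 → 0 < F v) :
    ∃ μ > 0, ∀ v ∈ K, μ * ‖v‖ ≤ F v := by
  set S := (K : Set E) ∩ sphere 0 1
  have hS : IsCompact S := (isCompact_sphere 0 1).inter_left K.isClosed
  have hF_zero : F 0 = 0 := by simpa using hF_smul 0 le_rfl 0
  have hnormalize : ∀ v ∈ K, v ≠ 0 → ‖v‖⁻¹ • v ∈ S := fun v hv hv0 =>
    ⟨K.smul_mem hv (inv_nonneg.2 (norm_nonneg v)), by simp [norm_smul, hv0]⟩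
  have hF_eq : ∀ v, v ≠ 0 → F v = ‖v‖ * F (‖v‖⁻¹ • v) := fun v hv0 => by
    rw [← hF_smul _ (norm_nonneg v), smul_smul, mul_inv_cancel₀ (norm_ne_zero_iff.2 hv0),
      one_smul]
  rcases S.eq_empty_or_nonempty with hS_empty | hS_ne
  · refine ⟨1, one_pos, fun v hv => ?_⟩
    obtain rfl : v = 0 := by
      by_contra hv0
      simpa [hS_empty] using hnormalize v hv hv0
    simp [hF_zero]
  · obtain ⟨u, hu, hmin⟩ := hS.exists_isMinOn hS_ne hF.continuousOn
    have hu0 : u ≠ 0 := ne_zero_of_mem_sphere (by norm_num) ⟨u, hu.2⟩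
    refine ⟨F u, hF_pos u hu.1 hu0, fun v hv => ?_⟩
    rcases eq_or_ne v 0 with rfl | hv0
    · simp [hF_zero]
    rw [hF_eq v hv0, mul_comm]
    exact mul_le_mul_of_nonneg_left (hmin (hnormalize v hv hv0)) (norm_nonneg v)

theorem eventually_norm_le_mul_of_mem_innerDual_innerDual (G : Finset E) :
    ∀ᶠ m in atTop, ∀ v ∈ innerDual (innerDual (G : Set E) : Set E), ∀ s, 0 ≤ s →
      (∀ g ∈ G, ⟪g, v⟫ ≤ s) → ‖v‖ ≤ m * s := by
  obtain ⟨μ, hμ, hF⟩ := (innerDual (innerDual (G : Set E) : Set E)).exists_pos_mul_norm_le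
    (F := fun v => ∑ g ∈ G, max 0 ⟪g, v⟫) (by fun_prop)
    (fun c hc v => by simp only [inner_smul_right, Finset.mul_sum, mul_max_of_nonneg _ _ hc,
      mul_zero])
    (fun v hv hv0 => by
      obtain ⟨g, hg, hpos⟩ := exists_pos_inner_of_mem_innerDual_innerDual hv hv0
      exact Finset.sum_pos' (fun _ _ => le_max_left _ _) ⟨g, hg, lt_max_of_lt_right hpos⟩)
  filter_upwards [eventually_ge_atTop (G.card / μ)] with m hm v hv s hs hvs
  calc ‖v‖ ≤ (∑ g ∈ G, max 0 ⟪g, v⟫) / μ := by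
        rw [le_div_iff₀ hμ, mul_comm]
        exact hF v hv
    _ ≤ G.card * s / μ := by
        gcongr
        simpa using Finset.sum_le_card_nsmul G _ s fun g hg => max_le hs (hvs g hg)
    _ ≤ m * s := by
        rw [mul_div_right_comm]
        gcongr

theorem exists_infDist_innerDual_eq_norm (G : Finset E) (p : E) :
    ∃ q ∈ innerDual (G : Set E), infDist p (innerDual (G : Set E) : Set E) = ‖q - p‖ ∧
      q - p ∈ innerDual (innerDual (({g ∈ G | ⟪g, q⟫ = 0} : Finset E) : Set E) : Set E) := by
  set K := innerDual (G : Set E)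
  obtain ⟨q, hqK, hq⟩ := K.isClosed.exists_infDist_eq_dist K.nonempty p
  have hvar : ∀ y ∈ (K : Set E), ⟪p - q, y - q⟫ ≤ 0 := by
    refine (norm_eq_iInf_iff_real_inner_le_zero K.convex hqK).1 ?_
    simp only [← dist_eq_norm, ← hq, infDist_eq_iInf]
  refine ⟨q, hqK, by rw [hq, dist_comm, dist_eq_norm], mem_innerDual.2 fun x hx => ?_⟩
  obtain ⟨t, htK, ht⟩ := ((eventually_add_smul_mem_innerDual hqK hx).and self_mem_nhdsWithin).exists
  have := hvar _ htK
  rw [add_sub_cancel_left, real_inner_smul_right] at this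
  rw [← neg_sub p q, inner_neg_right, real_inner_comm, neg_nonneg]
  exact nonpos_of_mul_nonpos_right this ht

theorem eventually_infDist_innerDual_le_mul (G : Finset E) :
    ∀ᶠ m in atTop, ∀ p s, 0 ≤ s → (∀ g ∈ G, -⟪g, p⟫ ≤ s) →
      infDist p (innerDual (G : Set E) : Set E) ≤ m * s := by
  filter_upwards [(eventually_all_finset G.powerset).2 fun I _ =>
    eventually_norm_le_mul_of_mem_innerDual_innerDual I] with m hm p s hs hp
  obtain ⟨q, -, hdist, hq⟩ := exists_infDist_innerDual_eq_norm G p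
  rw [hdist]
  refine hm _ (mem_powerset.2 (filter_subset _ _)) _ hq s hs fun g hg => ?_
  obtain ⟨hgG, hgq⟩ := mem_filter.1 hg
  rw [inner_sub_right, hgq, zero_sub]
  exact hp g hgG

theorem eventually_two_mul_infDist_le_infDist_tropicalWall
    {A : Finset E} {α β : E} (hα : α ∈ A) (hαβ : α ≠ β) :
    ∀ᶠ c in 𝓝[>] (0 : ℝ), ∀ p ∈ tropicalRegion A β,
      2 * c * infDist p (tropicalRegion A α) ≤ infDist p (tropicalWall α β) := by
  obtain ⟨m, hm, hm_pos⟩ :=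
    ((eventually_infDist_innerDual_le_mul (A.map (Equiv.subLeft α).toEmbedding)).and
      (eventually_gt_atTop 0)).exists
  have hN : 0 < ‖β - α‖ := norm_sub_pos_iff.2 hαβ.symm
  filter_upwards [Ioc_mem_nhdsGT (by positivity : (0 : ℝ) < 1 / (2 * m * ‖β - α‖))]
    with c ⟨hc_pos, hc⟩ p hp
  have hs : 0 ≤ ⟪β - α, p⟫ := by
    rw [inner_sub_left]
    exact sub_nonneg.2 (hp α hα)
  have hV : infDist p (tropicalRegion A α) ≤ m * ⟪β - α, p⟫ := by
    rw [tropicalRegion_eq_innerDual]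
    refine hm p _ hs fun g hg => ?_
    obtain ⟨δ, hδ, rfl⟩ := mem_map.1 hg
    simp only [Equiv.coe_toEmbedding, Equiv.subLeft_apply, inner_sub_left]
    linarith [hp δ hδ]
  have hcmN : 2 * c * m * ‖β - α‖ ≤ 1 := by
    rw [le_div_iff₀ (by positivity)] at hc
    linarith
  calc 2 * c * infDist p (tropicalRegion A α) ≤ 2 * c * (m * ⟪β - α, p⟫) := by gcongr
    _ ≤ 2 * c * (m * (‖β - α‖ * infDist p (tropicalWall α β))) := by
        gcongr
        exact inner_sub_le_norm_mul_infDist_tropicalWall α β p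
    _ = 2 * c * m * ‖β - α‖ * infDist p (tropicalWall α β) := by ring
    _ ≤ infDist p (tropicalWall α β) :=
        mul_le_of_le_one_left infDist_nonneg hcmN

end FiniteDimensional

theorem statement7_general (n : ℕ)
    (A : Finset (EuclideanSpace ℝ (Fin n))) :
    ∃ c > (0 : ℝ), ∀ α ∈ A, ∀ β ∈ A, α ≠ β →
      ∀ p ∈ {u : EuclideanSpace ℝ (Fin n) | ∀ δ ∈ A, ⟪δ, u⟫ ≤ ⟪β, u⟫},
        ∀ r > (0 : ℝ),
          r ≤ Metric.infDist p {u : EuclideanSpace ℝ (Fin n) | ∀ δ ∈ A, ⟪δ, u⟫ ≤ ⟪α, u⟫} →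
          2 * c * r ≤ Metric.infDist p {u : EuclideanSpace ℝ (Fin n) | ⟪α, u⟫ = ⟪β, u⟫} := by
  have h : ∀ᶠ c in 𝓝[>] (0 : ℝ), ∀ α ∈ A, ∀ β ∈ A, α ≠ β → ∀ p ∈ tropicalRegion A β,
      2 * c * infDist p (tropicalRegion A α) ≤ infDist p (tropicalWall α β) := by
    refine (eventually_all_finset A).2 fun α hα => (eventually_all_finset A).2 fun β _ => ?_
    rcases eq_or_ne α β with rfl | hαβ
    · exact Eventually.of_forall fun _ h => absurd rfl h
    · exact (eventually_two_mul_infDist_le_infDist_tropicalWall hα hαβ).mono fun _ h _ => h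
  obtain ⟨c, hc, hc_pos⟩ := (h.and self_mem_nhdsWithin).exists
  refine ⟨c, hc_pos, fun α hα β hβ hαβ p hp r _ hr => ?_⟩
  exact (mul_le_mul_of_nonneg_left hr (by positivity)).trans (hc α hα β hβ hαβ p hp)

/-- For a finite set `A ⊆ ℝⁿ`, with tropical regions
`V γ = {u | ∀ δ ∈ A, ⟪δ,u⟫ ≤ ⟪γ,u⟫}` and walls `H(α,β) = {u | ⟪α,u⟫ = ⟪β,u⟫}`, there is a
constant `c > 0` such that any point of `V β` at distance at least `r` from `V α` is at
distance at least `2·c·r` from the wall `H(α,β)`. -/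
theorem statement7 (n : ℕ) (hn : 1 ≤ n)
    (A : Finset (EuclideanSpace ℝ (Fin n))) :
    ∃ c > (0 : ℝ), ∀ α ∈ A, ∀ β ∈ A, α ≠ β →
      ∀ p ∈ {u : EuclideanSpace ℝ (Fin n) | ∀ δ ∈ A, ⟪δ, u⟫ ≤ ⟪β, u⟫},
        ∀ r > (0 : ℝ),
          r ≤ Metric.infDist p {u : EuclideanSpace ℝ (Fin n) | ∀ δ ∈ A, ⟪δ, u⟫ ≤ ⟪α, u⟫} →
          2 * c * r ≤ Metric.infDist p {u : EuclideanSpace ℝ (Fin n) | ⟪α, u⟫ = ⟪β, u⟫} :=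
  statement7_general n A
end

section
/- Let n ≥ 1 and let A be a finite subset of ℝⁿ. For γ ∈ A let V_γ = {u ∈ ℝⁿ : ⟨δ, u⟩ ≤ ⟨γ, u⟩ for all δ ∈ A}. Let ε₀ > 0 and let c : A → ℝ be positive with c(α)/c(β) < e^{ε₀} for all α, β ∈ A. Then there exists c′ > 0 such that for all α, β ∈ A with α ≠ β, all s > 0, and all u ∈ V_β whose Euclidean distance to the set V_α is at least s, one has c(α)·e^{⟨α,u⟩} < e^{ε₀ − 2·c′·s·‖α−β‖} · c(β)·e^{⟨β,u⟩}. -/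
open scoped RealInnerProductSpace

/-!
For `u ∈ V β` every constraint `⟪α - δ, w⟫ ≥ 0` cutting out `V α` is violated at `u` by at most
`h = ⟪β - α, u⟫`, so Hoffman's error bound for polyhedral cones gives `dist(u, V α) ≤ K h`;
exponentiating `s ≤ K h` yields the claim.

Hoffman's bound for the cone `C = {w | ∀ a ∈ T, 0 ≤ ⟪a, w⟫}`: if `w` is the nearest point of `C`
to `u`, then `y = w - u` lies in the double dual of `T`, which by Farkas is the closure of the cone
spanned by `T`. By conic Carathéodory, each element of that cone is a nonnegative combination of a
linearly independent subfamily of `T`, with coefficient sum at most `K` times its norm; since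
`⟪a, u⟫ ≥ -h` for `a ∈ T`, this gives `‖y‖² = -⟪y, u⟫ ≤ K ‖y‖ h`.
-/

section Caratheodory

variable {𝕜 M : Type*} [Field 𝕜] [LinearOrder 𝕜] [IsStrictOrderedRing 𝕜]
  [AddCommGroup M] [Module 𝕜 M]

-- Move `lam` along `-ν` until its first coefficient vanishes.
theorem exists_ssubset_sum_smul_eq_of_sum_smul_eq_zero {T : Finset M} {ν : M → 𝕜}
    (hν : ∑ a ∈ T, ν a • a = 0) {a₀ : M} (ha₀ : a₀ ∈ T) (hν₀ : 0 < ν a₀)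
    {lam : M → 𝕜} (hlam : ∀ a ∈ T, 0 ≤ lam a) :
    ∃ S ⊂ T, ∃ μ : M → 𝕜, (∀ a ∈ S, 0 ≤ μ a) ∧ ∑ a ∈ S, μ a • a = ∑ a ∈ T, lam a • a := by
  classical
  obtain ⟨a₁, ha₁, hmin⟩ := (T.filter (0 < ν ·)).exists_min_image (fun a => lam a / ν a)
    ⟨a₀, Finset.mem_filter.2 ⟨ha₀, hν₀⟩⟩
  rw [Finset.mem_filter] at ha₁
  set t := lam a₁ / ν a₁
  have ht : 0 ≤ t := div_nonneg (hlam a₁ ha₁.1) ha₁.2.le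
  refine ⟨T.erase a₁, Finset.erase_ssubset ha₁.1, fun a => lam a - t * ν a, fun a ha => ?_, ?_⟩
  · have ha := Finset.mem_of_mem_erase ha
    rcases lt_or_ge 0 (ν a) with hpos | hnonpos
    · have := hmin a (Finset.mem_filter.2 ⟨ha, hpos⟩)
      rw [le_div_iff₀ hpos] at this
      linarith
    · nlinarith [hlam a ha]
  · rw [Finset.sum_erase _ (by simp [t, div_mul_cancel₀ _ ha₁.2.ne'])]
    simp only [sub_smul, mul_smul, Finset.sum_sub_distrib, ← Finset.smul_sum, hν, smul_zero,
      sub_zero]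

theorem exists_ssubset_sum_smul_eq_of_not_linearIndepOn {T : Finset M}
    (hT : ¬ LinearIndepOn 𝕜 id (T : Set M)) {lam : M → 𝕜} (hlam : ∀ a ∈ T, 0 ≤ lam a) :
    ∃ S ⊂ T, ∃ μ : M → 𝕜, (∀ a ∈ S, 0 ≤ μ a) ∧ ∑ a ∈ S, μ a • a = ∑ a ∈ T, lam a • a := by
  obtain ⟨ν, hν, a₀, ha₀, hν₀⟩ := not_linearIndepOn_finset_iff.1 hT
  rcases hν₀.lt_or_gt with hneg | hpos
  · refine exists_ssubset_sum_smul_eq_of_sum_smul_eq_zero (ν := -ν) ?_ ha₀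
      (by simpa using hneg) hlam
    simpa [neg_smul] using hν
  · exact exists_ssubset_sum_smul_eq_of_sum_smul_eq_zero hν ha₀ hpos hlam

end Caratheodory

section ConicCombination

variable {E : Type*} [NormedAddCommGroup E] [NormedSpace ℝ E]

theorem LinearIndepOn.exists_sum_le_mul_norm_sum_smul {B : Finset E}
    (hB : LinearIndepOn ℝ id (B : Set E)) :
    ∃ K, 0 ≤ K ∧ ∀ μ : E → ℝ, ∑ b ∈ B, μ b ≤ K * ‖∑ b ∈ B, μ b • b‖ := by
  let L := Fintype.linearCombination ℝ (Subtype.val : ↥(B : Set E) → E)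
  obtain ⟨K₀, -, hK₀⟩ := L.exists_antilipschitzWith
    (LinearMap.ker_eq_bot.2 hB.fintypeLinearCombination_injective)
  refine ⟨B.card * K₀, by positivity, fun μ => ?_⟩
  let g : ↥(B : Set E) → ℝ := fun b => μ b
  have hLg : L g = ∑ b ∈ B, μ b • b := by
    simp [L, g, Fintype.linearCombination_apply, Finset.sum_attach B (fun b => μ b • b)]
  have hg : ‖g‖ ≤ K₀ * ‖∑ b ∈ B, μ b • b‖ := by
    simpa [dist_eq_norm, hLg] using hK₀.le_mul_dist g 0
  calc ∑ b ∈ B, μ b = ∑ b : ↥(B : Set E), g b := (Finset.sum_coe_sort B μ).symm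
    _ ≤ ∑ _b : ↥(B : Set E), ‖g‖ :=
      Finset.sum_le_sum fun b _ => (le_abs_self _).trans (norm_le_pi_norm g b)
    _ = B.card * ‖g‖ := by simp
    _ ≤ B.card * K₀ * ‖∑ b ∈ B, μ b • b‖ := by
      rw [mul_assoc]; gcongr

theorem Finset.exists_bounded_conic_repr (T : Finset E) :
    ∃ K, 0 ≤ K ∧ ∀ lam : E → ℝ, (∀ a ∈ T, 0 ≤ lam a) →
      ∃ S ⊆ T, ∃ μ : E → ℝ, (∀ a ∈ S, 0 ≤ μ a) ∧ ∑ a ∈ S, μ a • a = ∑ a ∈ T, lam a • a ∧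
        ∑ a ∈ S, μ a ≤ K * ‖∑ a ∈ T, lam a • a‖ := by
  classical
  induction T using Finset.strongInduction with
  | H T ih =>
  by_cases hT : LinearIndepOn ℝ id (T : Set E)
  · obtain ⟨K, hK, hbound⟩ := hT.exists_sum_le_mul_norm_sum_smul
    exact ⟨K, hK, fun lam hlam => ⟨T, subset_rfl, lam, hlam, rfl, hbound lam⟩⟩
  choose! K hK₀ hK using ih
  refine ⟨∑ S ∈ T.ssubsets, K S, Finset.sum_nonneg fun S hS => hK₀ S (Finset.mem_ssubsets.1 hS),
    fun lam hlam => ?_⟩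
  obtain ⟨S, hST, μ, hμ, hμT⟩ := exists_ssubset_sum_smul_eq_of_not_linearIndepOn hT hlam
  obtain ⟨R, hRS, ν, hν, hνS, hνK⟩ := hK S hST μ hμ
  refine ⟨R, hRS.trans hST.subset, ν, hν, hνS.trans hμT, hνK.trans ?_⟩
  rw [hμT]
  gcongr
  exact Finset.single_le_sum (fun S hS => hK₀ S (Finset.mem_ssubsets.1 hS))
    (Finset.mem_ssubsets.2 hST)

end ConicCombination

section Hoffman

variable {E : Type*} [NormedAddCommGroup E] [InnerProductSpace ℝ E]

theorem Finset.exists_neg_inner_le_of_mem_closure_hull (T : Finset E) :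
    ∃ K, 0 ≤ K ∧ ∀ (u : E) (h : ℝ), 0 ≤ h → (∀ a ∈ T, -h ≤ ⟪a, u⟫) →
      ∀ y ∈ closure (PointedCone.hull ℝ (T : Set E) : Set E), -⟪y, u⟫ ≤ K * ‖y‖ * h := by
  obtain ⟨K, hK, hrepr⟩ := T.exists_bounded_conic_repr
  refine ⟨K, hK, fun u h hh hu => closure_minimal (t := {y | -⟪y, u⟫ ≤ K * ‖y‖ * h})
    (fun y hy => ?_) (isClosed_le (by fun_prop) (by fun_prop))⟩
  obtain ⟨f, -, rfl⟩ := Submodule.mem_span_finset.1 hy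
  obtain ⟨S, hST, μ, hμ, hμf, hμK⟩ := hrepr (fun a => f a) fun a _ => (f a).2
  change -⟪∑ a ∈ T, (f a : ℝ) • a, u⟫ ≤ K * ‖∑ a ∈ T, (f a : ℝ) • a‖ * h
  rw [← hμf] at hμK ⊢
  calc -⟪∑ a ∈ S, μ a • a, u⟫ = ∑ a ∈ S, μ a * -⟪a, u⟫ := by
        simp [sum_inner, real_inner_smul_left]
    _ ≤ ∑ a ∈ S, μ a * h :=
        Finset.sum_le_sum fun a ha =>
          mul_le_mul_of_nonneg_left (by linarith [hu a (hST ha)]) (hμ a ha)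
    _ ≤ K * ‖∑ a ∈ S, μ a • a‖ * h := by
        rw [← Finset.sum_mul]; exact mul_le_mul_of_nonneg_right hμK hh

variable [CompleteSpace E]

theorem mem_closure_hull_of_mem_innerDual_innerDual {s : Set E} {y : E}
    (hy : y ∈ ProperCone.innerDual (ProperCone.innerDual s : Set E)) :
    y ∈ closure (PointedCone.hull ℝ s : Set E) := by
  by_contra h
  obtain ⟨z, hz, hyz⟩ :=
    ProperCone.hyperplane_separation' (Submodule.closure (PointedCone.hull ℝ s)) h
  have hzs : z ∈ ProperCone.innerDual s := fun x hx =>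
    hz x (subset_closure (PointedCone.subset_hull hx))
  exact hyz.not_ge (real_inner_comm y z ▸ hy hzs)

-- Hoffman's error bound for a polyhedral cone.
theorem Finset.exists_infDist_innerDual_le (T : Finset E) :
    ∃ K, 0 ≤ K ∧ ∀ (u : E) (h : ℝ), 0 ≤ h → (∀ a ∈ T, -h ≤ ⟪a, u⟫) →
      Metric.infDist u (ProperCone.innerDual (T : Set E)) ≤ K * h := by
  obtain ⟨K, hK, hbound⟩ := T.exists_neg_inner_le_of_mem_closure_hull
  refine ⟨K, hK, fun u h hh hu => ?_⟩
  set C := ProperCone.innerDual (T : Set E)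
  obtain ⟨w, hwC, hw⟩ :=
    exists_norm_eq_iInf_of_complete_convex C.nonempty C.isClosed.isComplete C.convex u
  have hvar : ∀ x ∈ C, 0 ≤ ⟪w - u, x - w⟫ := fun x hx => by
    have := (norm_eq_iInf_iff_real_inner_le_zero C.convex hwC).1 hw x hx
    rwa [← neg_sub w u, inner_neg_left, neg_nonpos] at this
  have hw0 : ⟪w - u, w⟫ = 0 := by
    have h0 := hvar 0 (zero_mem C)
    have h2 := hvar ((2 : ℝ) • w) (C.smul_mem hwC zero_le_two)
    rw [two_smul, add_sub_cancel_right] at h2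
    rw [zero_sub, inner_neg_right] at h0
    linarith
  have hdual : w - u ∈ ProperCone.innerDual (C : Set E) := fun x hx => by
    have := hvar x hx
    rw [inner_sub_right, hw0, sub_zero, real_inner_comm] at this
    exact this
  have hsq : ‖w - u‖ ^ 2 ≤ K * ‖w - u‖ * h := by
    have := hbound u h hh hu _ (mem_closure_hull_of_mem_innerDual_innerDual hdual)
    rw [← real_inner_self_eq_norm_sq]
    calc ⟪w - u, w - u⟫ = -⟪w - u, u⟫ := by rw [inner_sub_right, hw0, zero_sub]
      _ ≤ K * ‖w - u‖ * h := this
  calc Metric.infDist u C ≤ dist u w := Metric.infDist_le_dist_of_mem hwC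
    _ = ‖w - u‖ := dist_comm u w ▸ dist_eq_norm w u
    _ ≤ K * h := by nlinarith [norm_nonneg (w - u), mul_nonneg hK hh]

theorem setOf_inner_le_eq_innerDual [DecidableEq E] (A : Finset E) (α : E) :
    {w : E | ∀ δ ∈ A, ⟪δ, w⟫ ≤ ⟪α, w⟫} =
      ProperCone.innerDual ((A.image (α - ·) : Finset E) : Set E) := by
  ext w
  simp [inner_sub_left]

theorem Finset.exists_pos_mul_infDist_mul_norm_le (A : Finset E) :
    ∃ κ > 0, ∀ α ∈ A, ∀ β ∈ A, ∀ u : E, (∀ δ ∈ A, ⟪δ, u⟫ ≤ ⟪β, u⟫) →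
      κ * Metric.infDist u {w | ∀ δ ∈ A, ⟪δ, w⟫ ≤ ⟪α, w⟫} * ‖α - β‖ ≤ ⟪β, u⟫ - ⟪α, u⟫ := by
  classical
  choose K hK₀ hK using fun α : E => (A.image (α - ·)).exists_infDist_innerDual_le
  obtain ⟨M, hM⟩ := ((A ×ˢ A).image fun p => K p.1 * ‖p.1 - p.2‖).exists_le
  refine ⟨(max M 1)⁻¹, by positivity, fun α hα β hβ u hu => ?_⟩
  set h := ⟪β, u⟫ - ⟪α, u⟫
  have hh : 0 ≤ h := sub_nonneg.2 (hu α hα)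
  have hdist := hK α u h hh (by
    simp only [Finset.mem_image, forall_exists_index, and_imp, forall_apply_eq_imp_iff₂,
      inner_sub_left]
    intro δ hδ
    linarith [hu δ hδ])
  have hKM : K α * ‖α - β‖ ≤ max M 1 :=
    (hM _ (Finset.mem_image_of_mem _ (Finset.mk_mem_product hα hβ))).trans
      (le_max_left _ _)
  rw [setOf_inner_le_eq_innerDual]
  calc (max M 1)⁻¹ * Metric.infDist u _ * ‖α - β‖ ≤ (max M 1)⁻¹ * (K α * h) * ‖α - β‖ := by
        gcongr
    _ = (max M 1)⁻¹ * (K α * ‖α - β‖) * h := by ring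
    _ ≤ (max M 1)⁻¹ * max M 1 * h := by gcongr
    _ = h := by field_simp

end Hoffman

theorem statement8_general (n : ℕ)
    (A : Finset (EuclideanSpace ℝ (Fin n)))
    (ε₀ : ℝ)
    (c : EuclideanSpace ℝ (Fin n) → ℝ)
    (hcpos : ∀ α ∈ A, 0 < c α)
    (hratio : ∀ α ∈ A, ∀ β ∈ A, c α / c β < Real.exp ε₀) :
    ∃ c' > (0 : ℝ), ∀ α ∈ A, ∀ β ∈ A, α ≠ β → ∀ s > (0 : ℝ),
      ∀ u ∈ {u : EuclideanSpace ℝ (Fin n) | ∀ δ ∈ A, ⟪δ, u⟫ ≤ ⟪β, u⟫},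
        s ≤ Metric.infDist u {w : EuclideanSpace ℝ (Fin n) | ∀ δ ∈ A, ⟪δ, w⟫ ≤ ⟪α, w⟫} →
        c α * Real.exp ⟪α, u⟫ <
          Real.exp (ε₀ - 2 * c' * s * ‖α - β‖) * (c β * Real.exp ⟪β, u⟫) := by
  obtain ⟨κ, hκ, hsep⟩ := A.exists_pos_mul_infDist_mul_norm_le
  refine ⟨κ / 2, by positivity, fun α hα β hβ _ s _ u hu hdist => ?_⟩
  have hgap : 2 * (κ / 2) * s * ‖α - β‖ ≤ ⟪β, u⟫ - ⟪α, u⟫ :=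
    calc 2 * (κ / 2) * s * ‖α - β‖ = κ * s * ‖α - β‖ := by ring
      _ ≤ κ * Metric.infDist u _ * ‖α - β‖ := by gcongr
      _ ≤ ⟪β, u⟫ - ⟪α, u⟫ := hsep α hα β hβ u hu
  have hcβ := hcpos β hβ
  have hc : c α < Real.exp ε₀ * c β := (div_lt_iff₀ hcβ).1 (hratio α hα β hβ)
  calc c α * Real.exp ⟪α, u⟫ < Real.exp ε₀ * c β * Real.exp ⟪α, u⟫ := by gcongr
    _ = Real.exp (ε₀ - (⟪β, u⟫ - ⟪α, u⟫)) * (c β * Real.exp ⟪β, u⟫) := by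
      rw [Real.exp_sub, Real.exp_sub]; field_simp
    _ ≤ Real.exp (ε₀ - 2 * (κ / 2) * s * ‖α - β‖) * (c β * Real.exp ⟪β, u⟫) := by
      gcongr

/-- For a finite set `A ⊆ ℝⁿ` with tropical regions
`V γ = {u | ∀ δ ∈ A, ⟪δ,u⟫ ≤ ⟪γ,u⟫}`, and positive coefficients `c` with
`c α / c β < e^{ε₀}`, there is `c′ > 0` such that for distinct `α, β ∈ A`, any `s > 0` and any
`u ∈ V β` at distance at least `s` from `V α` one has
`c α · e^{⟪α,u⟫} < e^{ε₀ − 2·c′·s·‖α−β‖} · c β · e^{⟪β,u⟫}`. -/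
theorem statement8 (n : ℕ) (hn : 1 ≤ n)
    (A : Finset (EuclideanSpace ℝ (Fin n)))
    (ε₀ : ℝ) (hε₀ : 0 < ε₀)
    (c : EuclideanSpace ℝ (Fin n) → ℝ)
    (hcpos : ∀ α ∈ A, 0 < c α)
    (hratio : ∀ α ∈ A, ∀ β ∈ A, c α / c β < Real.exp ε₀) :
    ∃ c' > (0 : ℝ), ∀ α ∈ A, ∀ β ∈ A, α ≠ β → ∀ s > (0 : ℝ),
      ∀ u ∈ {u : EuclideanSpace ℝ (Fin n) | ∀ δ ∈ A, ⟪δ, u⟫ ≤ ⟪β, u⟫},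
        s ≤ Metric.infDist u {w : EuclideanSpace ℝ (Fin n) | ∀ δ ∈ A, ⟪δ, w⟫ ≤ ⟪α, w⟫} →
        c α * Real.exp ⟪α, u⟫ <
          Real.exp (ε₀ - 2 * c' * s * ‖α - β‖) * (c β * Real.exp ⟪β, u⟫) :=
  statement8_general n A ε₀ c hcpos hratio
end

section
/- Let n ≥ 1 and let A be a nonempty finite subset of ℝⁿ. For γ ∈ A let V_γ = {u ∈ ℝⁿ : ⟨δ, u⟩ ≤ ⟨γ, u⟩ for all δ ∈ A}. Then for every ε > 0 there exists κ with 0 < κ ≤ ε such that for every p ∈ ℝⁿ with ‖p‖ ≥ ε/2 there exists a nonzero x ∈ ℝⁿ such that every α ∈ A with dist(p, V_α) ≤ κ/2 satisfies x ∈ V_α. -/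
open scoped RealInnerProductSpace Pointwise

/-- For a nonempty finite set `A ⊆ ℝⁿ` with tropical regions
`V γ = {u | ∀ δ ∈ A, ⟪δ,u⟫ ≤ ⟪γ,u⟫}` and any `ε > 0`, there is `κ ∈ (0, ε]` such that for
every `p` with `‖p‖ ≥ ε/2` there is a nonzero common point of all the regions `V α` passing
within distance `κ/2` of `p`. -/
theorem statement9 (n : ℕ) (hn : 1 ≤ n)
    (A : Finset (EuclideanSpace ℝ (Fin n))) (hA : A.Nonempty) :
    ∀ ε > (0 : ℝ), ∃ κ : ℝ, 0 < κ ∧ κ ≤ ε ∧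
      ∀ p : EuclideanSpace ℝ (Fin n), ε / 2 ≤ ‖p‖ →
        ∃ x : EuclideanSpace ℝ (Fin n), x ≠ 0 ∧
          ∀ α ∈ A,
            Metric.infDist p {u : EuclideanSpace ℝ (Fin n) | ∀ δ ∈ A, ⟪δ, u⟫ ≤ ⟪α, u⟫} ≤ κ / 2 →
            x ∈ {u : EuclideanSpace ℝ (Fin n) | ∀ δ ∈ A, ⟪δ, u⟫ ≤ ⟪α, u⟫} := by
  classical
  intro ε hε
  let E := EuclideanSpace ℝ (Fin n)
  haveI : Nonempty (Fin n) := ⟨⟨0, hn⟩⟩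
  haveI : Nontrivial E := by
    refine nontrivial_of_ne (EuclideanSpace.single ⟨0, hn⟩ (1:ℝ)) 0 ?_
    intro h
    have : (EuclideanSpace.single ⟨0, hn⟩ (1:ℝ) : E) ⟨0, hn⟩ = (0 : E) ⟨0, hn⟩ :=
      congrArg (fun v : E => v ⟨0, hn⟩) h
    rw [EuclideanSpace.single_apply] at this
    simp only [if_pos rfl] at this
    exact one_ne_zero this
  set V : E → Set E := fun α => {u : E | ∀ δ ∈ A, ⟪δ, u⟫ ≤ ⟪α, u⟫} with hV
  have h0mem : ∀ α, (0 : E) ∈ V α := by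
    intro α δ hδ
    simp
  have hVne : ∀ α, (V α).Nonempty := fun α => ⟨0, h0mem α⟩
  have hVclosed : ∀ α, IsClosed (V α) := by
    intro α
    have : V α = ⋂ δ ∈ A, {u : E | ⟪δ, u⟫ ≤ ⟪α, u⟫} := by
      ext u; simp [hV]
    rw [this]
    refine isClosed_biInter fun δ _ => isClosed_le ?_ ?_
    · exact continuous_const.inner continuous_id
    · exact continuous_const.inner continuous_id
  have hVcone : ∀ α, ∀ t : ℝ, 0 ≤ t → ∀ u ∈ V α, t • u ∈ V α := by
    intro α t ht u hu δ hδ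
    have := hu δ hδ
    rw [inner_smul_right, inner_smul_right]
    exact mul_le_mul_of_nonneg_left this ht
  -- scaling of infDist for cones
  have hscale : ∀ (α : E) (p : E), p ≠ 0 →
      Metric.infDist (‖p‖⁻¹ • p) (V α) ≤ ‖p‖⁻¹ * Metric.infDist p (V α) := by
    intro α p hp
    have hn0 : (‖p‖⁻¹ : ℝ) ≠ 0 := inv_ne_zero (norm_ne_zero_iff.mpr hp)
    have hsub : (‖p‖⁻¹ : ℝ) • (V α) ⊆ V α := by
      rintro y ⟨z, hz, rfl⟩
      exact hVcone α _ (inv_nonneg.mpr (norm_nonneg p)) z hz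
    have hne : ((‖p‖⁻¹ : ℝ) • (V α)).Nonempty := (hVne α).smul_set
    calc Metric.infDist (‖p‖⁻¹ • p) (V α)
        ≤ Metric.infDist (‖p‖⁻¹ • p) ((‖p‖⁻¹ : ℝ) • V α) :=
          Metric.infDist_le_infDist_of_subset hsub hne
      _ = ‖(‖p‖⁻¹ : ℝ)‖ * Metric.infDist p (V α) := infDist_smul₀ hn0 _ _
      _ = ‖p‖⁻¹ * Metric.infDist p (V α) := by rw [norm_inv, norm_norm]
  -- compactness: for each "degenerate" subset S, a positive lower bound on the sphere
  have claim : ∀ S : Finset E, ∃ c : ℝ, 0 < c ∧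
      ((∀ x : E, x ≠ 0 → ∃ α ∈ S, x ∉ V α) →
        ∀ u : E, ‖u‖ = 1 → ∃ α ∈ S, c ≤ Metric.infDist u (V α)) := by
    intro S
    by_cases hdeg : ∀ x : E, x ≠ 0 → ∃ α ∈ S, x ∉ V α
    · have hS : S.Nonempty := by
        obtain ⟨x, hx⟩ := exists_ne (0 : E)
        obtain ⟨α, hα, _⟩ := hdeg x hx
        exact ⟨α, hα⟩
      set g : E → ℝ := fun u => S.sup' hS fun α => Metric.infDist u (V α) with hg
      have hgcont : Continuous g := by
        apply Continuous.finset_sup'_apply hS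
        intro i _
        exact Metric.continuous_infDist_pt (V i)
      have hsphne : (Metric.sphere (0:E) 1).Nonempty :=
        NormedSpace.sphere_nonempty.mpr zero_le_one
      obtain ⟨u₀, hu₀, hmin'⟩ := (isCompact_sphere (0:E) 1).exists_isMinOn hsphne
        hgcont.continuousOn
      have hmin : ∀ u ∈ Metric.sphere (0:E) 1, g u₀ ≤ g u := fun u hu => hmin' hu
      refine ⟨g u₀, ?_, ?_⟩
      · by_contra hle
        push_neg at hle
        have hu₀mem : ∀ α ∈ S, u₀ ∈ V α := by
          intro α hα
          have h1 : Metric.infDist u₀ (V α) ≤ g u₀ :=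
            Finset.le_sup' (fun β => Metric.infDist u₀ (V β)) hα
          have h2 : Metric.infDist u₀ (V α) = 0 :=
            le_antisymm (h1.trans hle) Metric.infDist_nonneg
          exact ((hVclosed α).mem_iff_infDist_zero (hVne α)).mpr h2
        have hu₀ne : u₀ ≠ 0 := by
          have : ‖u₀‖ = 1 := by simpa using hu₀
          intro h; rw [h] at this; simp at this
        obtain ⟨α, hα, hna⟩ := hdeg u₀ hu₀ne
        exact hna (hu₀mem α hα)
      · intro _ u hu
        have hu' : u ∈ Metric.sphere (0:E) 1 := by simpa [Metric.mem_sphere] using hu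
        have := hmin u hu'
        obtain ⟨α, hα, hEq⟩ := Finset.exists_mem_eq_sup' hS fun α => Metric.infDist u (V α)
        exact ⟨α, hα, this.trans (le_of_eq hEq)⟩
    · exact ⟨1, one_pos, fun h => absurd h hdeg⟩
  choose c hc0 hcP using claim
  set T : Finset (Finset E) :=
    A.powerset.filter (fun S => ∀ x : E, x ≠ 0 → ∃ α ∈ S, x ∉ V α) with hT
  have hMne : (insert (1:ℝ) (T.image c)).Nonempty := ⟨1, Finset.mem_insert_self _ _⟩
  set c0 : ℝ := (insert (1:ℝ) (T.image c)).min' hMne with hc0def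
  have hc0pos : 0 < c0 := by
    rcases Finset.mem_insert.mp (Finset.min'_mem _ hMne) with h | h
    · rw [hc0def, h]; exact one_pos
    · obtain ⟨S, _, hS⟩ := Finset.mem_image.mp h
      rw [hc0def, ← hS]; exact hc0 S
  refine ⟨min ε (ε * c0 / 2), ?_, min_le_left _ _, ?_⟩
  · exact lt_min hε (by positivity)
  intro p hp
  have hpnorm : 0 < ‖p‖ := lt_of_lt_of_le (by linarith) hp
  have hpne : p ≠ 0 := norm_pos_iff.mp hpnorm
  set κ := min ε (ε * c0 / 2) with hκ
  set S : Finset E := A.filter (fun α => Metric.infDist p (V α) ≤ κ / 2) with hSdef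
  by_cases hdeg : ∀ x : E, x ≠ 0 → ∃ α ∈ S, x ∉ V α
  · exfalso
    have hSA : S ∈ T := by
      rw [hT, Finset.mem_filter, Finset.mem_powerset]
      exact ⟨Finset.filter_subset _ _, hdeg⟩
    have hc0le : c0 ≤ c S :=
      Finset.min'_le _ _ (Finset.mem_insert.mpr (Or.inr (Finset.mem_image_of_mem c hSA)))
    have hunorm : ‖(‖p‖⁻¹ • p : E)‖ = 1 := by
      rw [norm_smul, norm_inv, norm_norm, inv_mul_cancel₀ (ne_of_gt hpnorm)]
    obtain ⟨α, hα, hle⟩ := hcP S hdeg _ hunorm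
    have hsc := hscale α p hpne
    have hαS := hα
    rw [hSdef, Finset.mem_filter] at hαS
    have hd : Metric.infDist p (V α) ≤ κ / 2 := hαS.2
    -- c S ≤ ‖p‖⁻¹ * infDist p (V α), so ‖p‖ * c S ≤ infDist p (V α)
    have h1 : c S ≤ ‖p‖⁻¹ * Metric.infDist p (V α) := hle.trans hsc
    have h2 : ‖p‖ * c S ≤ Metric.infDist p (V α) := by
      have := mul_le_mul_of_nonneg_left h1 (le_of_lt hpnorm)
      rwa [← mul_assoc, mul_inv_cancel₀ (ne_of_gt hpnorm), one_mul] at this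
    have h3 : ε / 2 * c0 ≤ ‖p‖ * c S :=
      mul_le_mul hp hc0le (le_of_lt hc0pos) (norm_nonneg p)
    have hκle : κ ≤ ε * c0 / 2 := min_le_right _ _
    have hκpos : 0 < κ := lt_min hε (by positivity)
    nlinarith [h2, h3, hd, hκle, hκpos]
  · push_neg at hdeg
    obtain ⟨x, hx0, hx⟩ := hdeg
    refine ⟨x, hx0, ?_⟩
    intro α hαA hdist
    exact hx α (by rw [hSdef, Finset.mem_filter]; exact ⟨hαA, hdist⟩)
end

section
/- Let n ≥ 1, let k ≥ 1, and let C₁, …, C_k be subsets of ℝⁿ, each nonempty, closed, and closed under multiplication by nonnegative scalars (i.e. cones), such that ⋂_{i=1}^{k} C_i ⊆ {0}. Then there exists r > 0 such that for every p ∈ ℝⁿ there is an index i with dist(p, C_i) ≥ r·‖p‖, where dist denotes the Euclidean distance from a point to a set. -/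
/-!
On the unit sphere the function `u ↦ maxᵢ dist(u, Cᵢ)` is continuous and positive, since no unit
vector lies in every `Cᵢ`; by compactness it is bounded below by some `r > 0`. Distances to a cone
are positively homogeneous, so rescaling a point `p ≠ 0` to `p / ‖p‖` gives the bound `r * ‖p‖`.
-/

open Metric Finset Pointwise

theorem IsCompact.exists_pos_forall_exists_le {X ι : Type*} [TopologicalSpace X] [Fintype ι]
    [Nonempty ι] {K : Set X} (hK : IsCompact K) {g : ι → X → ℝ} (hg : ∀ i, Continuous (g i))
    (hpos : ∀ x ∈ K, ∃ i, 0 < g i x) :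
    ∃ r > 0, ∀ x ∈ K, ∃ i, r ≤ g i x := by
  have hmax : Continuous fun x ↦ univ.sup' univ_nonempty (g · x) :=
    Continuous.finset_sup'_apply _ fun i _ ↦ hg i
  obtain ⟨r, hr, hK⟩ := hK.exists_forall_le' hmax.continuousOn (a := 0) fun x hx ↦ by
    simpa [lt_sup'_iff] using hpos x hx
  exact ⟨r, hr, fun x hx ↦ by simpa [le_sup'_iff] using hK x hx⟩

section Cone

variable {E : Type*} [NormedAddCommGroup E] [NormedSpace ℝ E] {C : Set E}

theorem smul_set_eq_self_of_smul_mem (hC : ∀ t : ℝ, 0 ≤ t → ∀ x ∈ C, t • x ∈ C) {t : ℝ}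
    (ht : 0 < t) : t • C = C := by
  refine (Set.smul_set_subset_iff.2 fun x hx ↦ hC t ht.le x hx).antisymm fun x hx ↦ ?_
  exact ⟨t⁻¹ • x, hC _ (inv_nonneg.2 ht.le) x hx, smul_inv_smul₀ ht.ne' x⟩

theorem infDist_smul_of_smul_mem (hC : ∀ t : ℝ, 0 ≤ t → ∀ x ∈ C, t • x ∈ C) {t : ℝ}
    (ht : 0 < t) (x : E) : infDist (t • x) C = t * infDist x C := by
  conv_lhs => rw [← smul_set_eq_self_of_smul_mem hC ht]
  rw [infDist_smul₀ ht.ne', Real.norm_of_nonneg ht.le]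

theorem exists_pos_mul_norm_le_infDist_of_iInter_subset_zero [ProperSpace E] {ι : Type*}
    [Fintype ι] [Nonempty ι] {C : ι → Set E} (hne : ∀ i, (C i).Nonempty)
    (hcl : ∀ i, IsClosed (C i)) (hcone : ∀ i, ∀ t : ℝ, 0 ≤ t → ∀ x ∈ C i, t • x ∈ C i)
    (hint : (⋂ i, C i) ⊆ {0}) :
    ∃ r > 0, ∀ p : E, ∃ i, r * ‖p‖ ≤ infDist p (C i) := by
  have hsphere : ∀ u ∈ sphere (0 : E) 1, ∃ i, 0 < infDist u (C i) := fun u hu ↦ by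
    have hu_notMem : u ∉ ⋂ i, C i := fun h ↦ by
      rw [hint h, mem_sphere_zero_iff_norm, norm_zero] at hu
      exact zero_ne_one hu
    obtain ⟨i, hi⟩ := not_forall.1 (Set.mem_iInter.not.1 hu_notMem)
    exact ⟨i, ((hcl i).notMem_iff_infDist_pos (hne i)).1 hi⟩
  obtain ⟨r, hr, hr_le⟩ := (isCompact_sphere (0 : E) 1).exists_pos_forall_exists_le
    (fun i ↦ continuous_infDist_pt (C i)) hsphere
  refine ⟨r, hr, fun p ↦ ?_⟩
  rcases eq_or_ne p 0 with rfl | hp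
  · exact ⟨Classical.arbitrary ι, by simp [infDist_nonneg]⟩
  have hp' : 0 < ‖p‖ := norm_pos_iff.2 hp
  obtain ⟨i, hi⟩ := hr_le (‖p‖⁻¹ • p) (by simp [norm_smul, hp'.ne'])
  refine ⟨i, ?_⟩
  calc r * ‖p‖ ≤ infDist (‖p‖⁻¹ • p) (C i) * ‖p‖ := by gcongr
    _ = infDist p (C i) := by
      rw [infDist_smul_of_smul_mem (hcone i) (inv_pos.2 hp'), mul_comm, ← mul_assoc,
        mul_inv_cancel₀ hp'.ne', one_mul]

end Cone

theorem statement10_general (n : ℕ) (k : ℕ) (hk : 1 ≤ k)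
    (C : Fin k → Set (EuclideanSpace ℝ (Fin n)))
    (hne : ∀ i, (C i).Nonempty)
    (hcl : ∀ i, IsClosed (C i))
    (hcone : ∀ i, ∀ t : ℝ, 0 ≤ t → ∀ x ∈ C i, t • x ∈ C i)
    (hint : (⋂ i, C i) ⊆ {0}) :
    ∃ r > (0 : ℝ), ∀ p : EuclideanSpace ℝ (Fin n), ∃ i,
      r * ‖p‖ ≤ Metric.infDist p (C i) := by
  have : Nonempty (Fin k) := ⟨⟨0, hk⟩⟩
  exact exists_pos_mul_norm_le_infDist_of_iInter_subset_zero hne hcl hcone hint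

/-- Finitely many nonempty closed cones in `ℝⁿ` whose common intersection is
contained in `{0}` admit a constant `r > 0` such that every point `p` is at distance at least
`r·‖p‖` from at least one of the cones. -/
theorem statement10 (n : ℕ) (hn : 1 ≤ n) (k : ℕ) (hk : 1 ≤ k)
    (C : Fin k → Set (EuclideanSpace ℝ (Fin n)))
    (hne : ∀ i, (C i).Nonempty)
    (hcl : ∀ i, IsClosed (C i))
    (hcone : ∀ i, ∀ t : ℝ, 0 ≤ t → ∀ x ∈ C i, t • x ∈ C i)
    (hint : (⋂ i, C i) ⊆ {0}) :
    ∃ r > (0 : ℝ), ∀ p : EuclideanSpace ℝ (Fin n), ∃ i,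
      r * ‖p‖ ≤ Metric.infDist p (C i) :=
  statement10_general n k hk C hne hcl hcone hint
end

section
/- Let N ≥ 2 be a natural number, let δ be a real number with 1 − 1/(N−1) ≤ δ ≤ 1, and let w : Fin N → ℂ be a family of complex numbers, not all zero. Suppose that for every index i, if |w_i| ≥ (1−δ)·max_j |w_j|, then w_i is a nonnegative real number. Then the real part of Σ_i w_i is strictly positive. -/
/-!
Let `i₀` be an index of maximal modulus `M > 0`. The hypothesis at `i₀` forces `w i₀ = M`, and each
of the other `N - 1` terms is either a nonnegative real or has modulus below
`(1 - δ) M ≤ M / (N - 1)`; so each has real part `> -M / (N - 1)`, and together they cannot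
cancel `M`.
-/

open Finset

lemma Finset.sum_pos_of_lt_neg_div {ι : Type*} [Fintype ι] [DecidableEq ι] (x : ι → ℝ) (i₀ : ι)
    (h₀ : 0 < x i₀) (h : ∀ i ≠ i₀, -(x i₀ / ((Fintype.card ι : ℝ) - 1)) < x i) :
    0 < ∑ i, x i := by
  rw [← add_sum_erase _ _ (mem_univ i₀)]
  rcases (univ.erase i₀).eq_empty_or_nonempty with hempty | hrest
  · simpa [hempty] using h₀
  have hcard : ((univ.erase i₀).card : ℝ) = (Fintype.card ι : ℝ) - 1 := by
    rw [card_erase_of_mem (mem_univ i₀), card_univ,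
      Nat.cast_sub (Fintype.card_pos_iff.mpr ⟨i₀⟩), Nat.cast_one]
  have hcard_ne : (Fintype.card ι : ℝ) - 1 ≠ 0 := by
    rw [← hcard]; exact_mod_cast hrest.card_pos.ne'
  have hlt := sum_lt_sum_of_nonempty hrest fun i hi => h i (ne_of_mem_erase hi)
  rw [sum_const, nsmul_eq_mul, hcard, mul_neg, mul_div_cancel₀ _ hcard_ne] at hlt
  linarith

lemma Complex.neg_lt_re_of_norm_lt_or_re_nonneg {z : ℂ} {r : ℝ} (hr : 0 < r)
    (h : ‖z‖ < r ∨ 0 ≤ z.re) : -r < z.re := by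
  rcases h with hsmall | hnonneg
  · linarith [neg_abs_le z.re, abs_re_le_norm z]
  · linarith

/-- Let `N ≥ 2`, let `1 − 1/(N−1) ≤ δ ≤ 1`, and let `w : Fin N → ℂ` be not
all zero.  If every `w i` whose modulus is at least `(1−δ)` times the maximal modulus is a
nonnegative real number, then the real part of `∑ i, w i` is strictly positive. -/
theorem statement12 (N : ℕ) (hN : 2 ≤ N) (δ : ℝ)
    (hδ1 : 1 - 1 / ((N : ℝ) - 1) ≤ δ)
    (w : Fin N → ℂ) (hw : ∃ i, w i ≠ 0)
    (h : ∀ i : Fin N,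
      (1 - δ) * (Finset.univ.sup' ⟨⟨0, by omega⟩, Finset.mem_univ _⟩
        fun j => ‖w j‖) ≤ ‖w i‖ →
      (w i).im = 0 ∧ 0 ≤ (w i).re) :
    0 < (∑ i, w i).re := by
  set M := Finset.univ.sup' ⟨⟨0, by omega⟩, Finset.mem_univ _⟩ fun j => ‖w j‖
  obtain ⟨i₀, -, hi₀⟩ : ∃ i ∈ univ, M = ‖w i‖ := exists_mem_eq_sup' _ _
  obtain ⟨k, hk⟩ := hw
  have hM : 0 < M := (norm_pos_iff.mpr hk).trans_le (le_sup' (fun j => ‖w j‖) (mem_univ k))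
  have hc : (1 : ℝ) ≤ (N : ℝ) - 1 := by linarith [show (2 : ℝ) ≤ N by exact_mod_cast hN]
  have hthreshold : (1 - δ) * M ≤ M / ((N : ℝ) - 1) := by
    rw [div_eq_inv_mul, ← one_div]
    exact mul_le_mul_of_nonneg_right (by linarith) hM.le
  have hδ : 1 - δ ≤ 1 := by linarith [(div_le_one (by linarith)).mpr hc]
  have hre₀ : (w i₀).re = M := by
    obtain ⟨him, hre⟩ := h i₀ (hi₀ ▸ mul_le_of_le_one_left hM.le hδ)
    rw [hi₀, Complex.re_eq_norm.mpr (Complex.nonneg_iff.mpr ⟨hre, him.symm⟩)]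
  rw [Complex.re_sum]
  refine sum_pos_of_lt_neg_div _ i₀ (hre₀ ▸ hM) fun i _ => ?_
  rw [hre₀, Fintype.card_fin]
  refine Complex.neg_lt_re_of_norm_lt_or_re_nonneg (div_pos hM (by linarith)) ?_
  by_cases hlarge : (1 - δ) * M ≤ ‖w i‖
  · exact Or.inr (h i hlarge).2
  · exact Or.inl ((not_le.mp hlarge).trans_le hthreshold)
end
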